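/- arXiv:math/0512402 — 9 statements merged into one kernel-verified Lean document; each statement's English description precedes it below -/
import Mathlib

section
/- For every weakly decreasing nonnegative integer sequence (d_1,...,d_n) that is the degree sequence of a simple graph, and all k, l with 1 ≤ k + l ≤ n, we have d_1 + ... + d_k − (d_{n−l+1} + ... + d_n) ≤ k(n−1−l). -/
/-!
A vertex `a ∉ B` has at most `|V| - 1 - |B|` neighbours outside `B`, so summing over `a ∈ A`
bounds `∑_{a ∈ A} deg a` by `|A| (|V| - 1 - |B|)` plus the number of edges between `A` and `B`,
and the latter is at most `∑_{b ∈ B} deg b`.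
-/

open Finset

namespace SimpleGraph

variable {V : Type*} [Fintype V] (G : SimpleGraph V) [DecidableRel G.Adj]

theorem sum_card_filter_adj_le_sum_degree (A B : Finset V) :
    ∑ a ∈ A, #(B.filter (G.Adj a)) ≤ ∑ b ∈ B, G.degree b := by
  have double_count :=
    sum_card_bipartiteAbove_eq_sum_card_bipartiteBelow (r := G.Adj) (s := A) (t := B)
  simp only [bipartiteAbove, bipartiteBelow] at double_count
  rw [double_count]
  refine sum_le_sum fun b _ => ?_
  rw [← card_neighborFinset_eq_degree]
  exact card_le_card fun a ha => (G.mem_neighborFinset b a).mpr ((mem_filter.mp ha).2.symm)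

variable [DecidableEq V]

theorem degree_add_card_add_one_le (B : Finset V) {a : V} (ha : a ∉ B) :
    G.degree a + #B + 1 ≤ Fintype.card V + #(B.filter (G.Adj a)) := by
  have hinter : G.neighborFinset a ∩ B = B.filter (G.Adj a) := by
    ext b; simp [and_comm]
  have hunion : G.neighborFinset a ∪ B ⊆ univ.erase a := fun b hb => by
    rcases mem_union.mp hb with hb | hb
    · exact mem_erase.mpr ⟨(G.ne_of_adj ((G.mem_neighborFinset a b).mp hb)).symm, mem_univ b⟩
    · exact mem_erase.mpr ⟨fun h => ha (h ▸ hb), mem_univ b⟩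
  have hcard := card_le_card hunion
  rw [card_erase_of_mem (mem_univ a), card_univ] at hcard
  have := card_union_add_card_inter (G.neighborFinset a) B
  rw [card_neighborFinset_eq_degree, hinter] at this
  have : 0 < Fintype.card V := Fintype.card_pos_iff.mpr ⟨a⟩
  omega

theorem sum_degree_add_card_mul_le (A B : Finset V) (hAB : Disjoint A B) :
    ∑ a ∈ A, G.degree a + #A * (#B + 1) ≤ #A * Fintype.card V + ∑ b ∈ B, G.degree b := by
  calc ∑ a ∈ A, G.degree a + #A * (#B + 1) = ∑ a ∈ A, (G.degree a + #B + 1) := by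
        rw [sum_add_distrib, sum_add_distrib, sum_const, sum_const, smul_eq_mul, smul_eq_mul]; ring
    _ ≤ ∑ a ∈ A, (Fintype.card V + #(B.filter (G.Adj a))) :=
        sum_le_sum fun a ha => G.degree_add_card_add_one_le B (Finset.disjoint_left.mp hAB ha)
    _ = #A * Fintype.card V + ∑ a ∈ A, #(B.filter (G.Adj a)) := by
        rw [sum_add_distrib, sum_const, smul_eq_mul]
    _ ≤ #A * Fintype.card V + ∑ b ∈ B, G.degree b :=
        Nat.add_le_add_left (G.sum_card_filter_adj_le_sum_degree A B) _

end SimpleGraph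

theorem fhm_inequalities_general (n k l : ℕ) (d : ℕ → ℕ)
    (G : SimpleGraph (Fin n)) [DecidableRel G.Adj]
    (hdeg : ∀ i : Fin n, G.degree i = d i.val)
    (hkl2 : k + l ≤ n) :
    (∑ i ∈ Finset.range k, (d i : ℤ)) - (∑ i ∈ Finset.Ico (n - l) n, (d i : ℤ))
      ≤ (k : ℤ) * ((n : ℤ) - 1 - (l : ℤ)) := by
  have sum_eq {s : Finset ℕ} (hs : ∀ i ∈ s, i < n) :
      ∑ i ∈ s, d i = ∑ v ∈ s.attachFin hs, G.degree v := by
    conv_lhs => rw [← map_valEmbedding_attachFin hs]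
    rw [sum_map]
    exact sum_congr rfl fun v _ => (hdeg v).symm
  have hA : ∀ i ∈ range k, i < n := fun i hi => by rw [mem_range] at hi; omega
  have hB : ∀ i ∈ Ico (n - l) n, i < n := fun i hi => (mem_Ico.mp hi).2
  have hAB : Disjoint ((range k).attachFin hA) ((Ico (n - l) n).attachFin hB) :=
    Finset.disjoint_left.mpr fun v hvA hvB => by
      rw [mem_attachFin, mem_range] at hvA
      rw [mem_attachFin, mem_Ico] at hvB
      omega
  have key := G.sum_degree_add_card_mul_le _ _ hAB
  rw [← sum_eq, ← sum_eq, card_attachFin, card_attachFin, card_range, Nat.card_Ico,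
    Fintype.card_fin, Nat.sub_sub_self (by omega)] at key
  zify at key
  linarith

/-- the Fulkerson–Hoffman–McAndrew inequalities hold for any weakly
decreasing degree sequence of a simple graph on `n` vertices. -/
theorem fhm_inequalities (n k l : ℕ) (d : ℕ → ℕ)
    (hdec : ∀ i j, i ≤ j → j < n → d j ≤ d i)
    (G : SimpleGraph (Fin n)) [DecidableRel G.Adj]
    (hdeg : ∀ i : Fin n, G.degree i = d i.val)
    (hkl1 : 1 ≤ k + l) (hkl2 : k + l ≤ n) :
    (∑ i ∈ Finset.range k, (d i : ℤ)) - (∑ i ∈ Finset.Ico (n - l) n, (d i : ℤ))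
      ≤ (k : ℤ) * ((n : ℤ) - 1 - (l : ℤ)) :=
  fhm_inequalities_general n k l d G hdeg hkl2
end

section
/- The number of threshold partitions of length n (degree partitions of threshold graphs on n vertices) equals 2^{n−1} for n ≥ 1. -/
open scoped Classical in
/-- The degree of vertex `v` in the simple graph `G` on `[n]`. -/
noncomputable def degC {n : ℕ} (G : SimpleGraph (Fin n)) (v : Fin n) : ℕ :=
  (Finset.univ.filter (fun w => G.Adj v w)).card

/-- A graph is threshold if every (nonempty) induced subgraph has a
dominating or an isolated vertex. -/
def IsThreshold {n : ℕ} (G : SimpleGraph (Fin n)) : Prop :=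
  ∀ S : Finset (Fin n), S.Nonempty →
    ∃ v ∈ S, (∀ w ∈ S, w ≠ v → G.Adj v w) ∨ (∀ w ∈ S, ¬ G.Adj v w)

/-- `d` is a threshold partition of length `n`: the weakly decreasing
rearrangement of the degree sequence of a threshold graph on `n` vertices. -/
def IsThresholdPartition (n : ℕ) (d : Fin n → ℕ) : Prop :=
  Antitone d ∧ ∃ G : SimpleGraph (Fin n), IsThreshold G ∧
    ∃ σ : Equiv.Perm (Fin n), ∀ i, d i = degC G (σ i)


/-! A threshold graph on `n ≥ 1` vertices has a dominating or an isolated vertex, and deleting it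
leaves a threshold graph. So its degree multiset is that of a graph built one vertex at a time,
each new vertex joined to all or to none of the earlier ones. The choice made for the first vertex
is irrelevant, and the degree multiset determines the other `n - 1` choices: once there are two
vertices, the last one added is isolated iff `0` is a degree. Hence threshold partitions of
length `n` correspond to Boolean sequences of length `n - 1`. -/

open Finset

variable {m n : ℕ}

noncomputable def degMult (G : SimpleGraph (Fin n)) : Multiset ℕ :=
  univ.val.map (degC G)

lemma degC_eq_of_forall_adj {G : SimpleGraph (Fin (m + 1))} {v : Fin (m + 1)}
    (hv : ∀ w, w ≠ v → G.Adj v w) : degC G v = m := by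
  classical
  have hnbr : univ.filter (G.Adj v) = univ.erase v := by
    ext w
    simpa [eq_comm] using ⟨fun h => h.ne, fun h => hv w (Ne.symm h)⟩
  simp [degC, hnbr]

lemma degC_eq_zero_of_forall_not_adj {G : SimpleGraph (Fin n)} {v : Fin n}
    (hv : ∀ w, ¬ G.Adj v w) : degC G v = 0 := by
  simp [degC, hv]

open scoped Classical in
lemma degC_succAbove (G : SimpleGraph (Fin (m + 1))) (v : Fin (m + 1)) (i : Fin m) :
    degC G (v.succAbove i)
      = degC (G.comap v.succAbove) i + if G.Adj v (v.succAbove i) then 1 else 0 := by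
  simp only [degC, card_filter]
  rw [Fin.sum_univ_succAbove _ v, add_comm]
  simp [G.adj_comm]

lemma degMult_eq_cons (G : SimpleGraph (Fin (m + 1))) (v : Fin (m + 1)) :
    degMult G = degC G v ::ₘ univ.val.map (degC G ∘ v.succAbove) := by
  rw [degMult, Fin.univ_succAbove _ v, cons_val, map_val, Multiset.map_cons, Multiset.map_map]
  rfl

lemma degMult_of_forall_adj {G : SimpleGraph (Fin (m + 1))} {v : Fin (m + 1)}
    (hv : ∀ w, w ≠ v → G.Adj v w) :
    degMult G = m ::ₘ (degMult (G.comap v.succAbove)).map (· + 1) := by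
  rw [degMult_eq_cons G v, degC_eq_of_forall_adj hv, degMult, Multiset.map_map]
  congr 1
  refine Multiset.map_congr rfl fun i _ => ?_
  simp [degC_succAbove G v i, hv _ (Fin.succAbove_ne v i)]

lemma degMult_of_forall_not_adj {G : SimpleGraph (Fin (m + 1))} {v : Fin (m + 1)}
    (hv : ∀ w, ¬ G.Adj v w) : degMult G = 0 ::ₘ degMult (G.comap v.succAbove) := by
  rw [degMult_eq_cons G v, degC_eq_zero_of_forall_not_adj hv, degMult]
  congr 1
  refine Multiset.map_congr rfl fun i _ => ?_
  simp [degC_succAbove G v i, hv]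

lemma IsThreshold.comap {G : SimpleGraph (Fin n)} (hG : IsThreshold G) {f : Fin m → Fin n}
    (hf : Function.Injective f) : IsThreshold (G.comap f) := by
  intro S hS
  obtain ⟨_, hu, hdom | hiso⟩ := hG (S.image f) (hS.image f)
  all_goals obtain ⟨i, hi, rfl⟩ := mem_image.mp hu
  · exact ⟨i, hi, .inl fun j hj hji => hdom _ (mem_image_of_mem f hj) (hf.ne hji)⟩
  · exact ⟨i, hi, .inr fun j hj => hiso _ (mem_image_of_mem f hj)⟩

/-- The threshold graph with creation sequence `ε`: vertex `j` is joined to every earlier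
vertex if `ε j`, and to none of them otherwise. -/
def creationGraph (ε : Fin n → Bool) : SimpleGraph (Fin n) where
  Adj i j := i ≠ j ∧ ε (max i j)
  symm := ⟨fun i j h => ⟨h.1.symm, max_comm i j ▸ h.2⟩⟩
  loopless := ⟨fun _ h => h.1 rfl⟩

lemma isThreshold_creationGraph (ε : Fin n → Bool) : IsThreshold (creationGraph ε) := by
  intro S hS
  refine ⟨S.max' hS, S.max'_mem hS, ?_⟩
  have hmax : ∀ w ∈ S, max (S.max' hS) w = S.max' hS := fun w hw => max_eq_left (S.le_max' w hw)
  cases hε : ε (S.max' hS)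
  · exact .inr fun w hw h => by simp [creationGraph, hmax w hw, hε] at h
  · exact .inl fun w hw hne => ⟨hne.symm, by simp [hmax w hw, hε]⟩

lemma creationGraph_eq_of_tail_eq {ε ε' : Fin (m + 1) → Bool} (h : Fin.tail ε = Fin.tail ε') :
    creationGraph ε = creationGraph ε' := by
  ext i j
  simp only [creationGraph]
  refine and_congr_right fun hij => ?_
  have hmax : max i j ≠ 0 := fun h0 => hij <| by
    rw [Fin.le_zero_iff.mp (h0 ▸ le_max_left i j : i ≤ 0),
      Fin.le_zero_iff.mp (h0 ▸ le_max_right i j : j ≤ 0)]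
  obtain ⟨k, hk⟩ := Fin.exists_succ_eq.mpr hmax
  rw [← hk]
  exact iff_of_eq (congrArg (· = true) (congrFun h k))

lemma creationGraph_comap_castSucc (ε : Fin (m + 1) → Bool) :
    (creationGraph ε).comap Fin.castSucc = creationGraph (Fin.init ε) := by
  ext i j
  simp [creationGraph, Fin.init, Fin.strictMono_castSucc.monotone.map_max]

lemma creationGraph_snoc_adj_last (ε : Fin m → Bool) (b : Bool) (w : Fin (m + 1)) :
    (creationGraph (Fin.snoc ε b)).Adj (Fin.last m) w ↔ w ≠ Fin.last m ∧ b := by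
  simp [creationGraph, max_eq_left (Fin.le_last w), ne_comm]

lemma degMult_creationGraph_snoc_true (ε : Fin m → Bool) :
    degMult (creationGraph (Fin.snoc ε true)) =
      m ::ₘ (degMult (creationGraph ε)).map (· + 1) := by
  rw [degMult_of_forall_adj (v := Fin.last m)
      fun w hw => by simpa [creationGraph_snoc_adj_last],
    Fin.succAbove_last, creationGraph_comap_castSucc, Fin.init_snoc]

lemma degMult_creationGraph_snoc_false (ε : Fin m → Bool) :
    degMult (creationGraph (Fin.snoc ε false)) = 0 ::ₘ degMult (creationGraph ε) := by
  rw [degMult_of_forall_not_adj (v := Fin.last m) fun w => by simp [creationGraph_snoc_adj_last],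
    Fin.succAbove_last, creationGraph_comap_castSucc, Fin.init_snoc]

theorem IsThreshold.exists_degMult_eq_creationGraph {G : SimpleGraph (Fin n)}
    (hG : IsThreshold G) : ∃ ε : Fin n → Bool, degMult G = degMult (creationGraph ε) := by
  induction n with
  | zero => exact ⟨Fin.elim0, by simp [degMult]⟩
  | succ m ih =>
    obtain ⟨v, -, hdom | hiso⟩ := hG univ univ_nonempty
    all_goals obtain ⟨ε, hε⟩ := ih (hG.comap (Fin.succAbove_right_injective (p := v)))
    · refine ⟨Fin.snoc ε true, ?_⟩
      rw [degMult_of_forall_adj fun w => hdom w (mem_univ w), hε,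
        degMult_creationGraph_snoc_true]
    · refine ⟨Fin.snoc ε false, ?_⟩
      rw [degMult_of_forall_not_adj fun w => hiso w (mem_univ w), hε,
        degMult_creationGraph_snoc_false]

theorem eq_of_degMult_creationGraph_cons_eq :
    ∀ {m : ℕ} {τ₁ τ₂ : Fin m → Bool} {b₁ b₂ : Bool},
      degMult (creationGraph (Fin.cons b₁ τ₁)) =
        degMult (creationGraph (Fin.cons b₂ τ₂)) → τ₁ = τ₂
  | 0, _, _, _, _, _ => Subsingleton.elim _ _
  | m + 1, τ₁, τ₂, b₁, b₂, h => by
    rw [← Fin.snoc_init_self τ₁, ← Fin.snoc_init_self τ₂] at h ⊢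
    rw [Fin.cons_snoc_eq_snoc_cons, Fin.cons_snoc_eq_snoc_cons] at h
    generalize τ₁ (Fin.last m) = c₁, τ₂ (Fin.last m) = c₂ at h ⊢
    cases c₁ <;> cases c₂ <;>
      simp only [degMult_creationGraph_snoc_true, degMult_creationGraph_snoc_false] at h
    · rw [eq_of_degMult_creationGraph_cons_eq ((Multiset.cons_inj_right 0).mp h)]
    · have hzero := h ▸ Multiset.mem_cons_self 0 _
      simp at hzero
    · have hzero := h.symm ▸ Multiset.mem_cons_self 0 _
      simp at hzero
    · rw [eq_of_degMult_creationGraph_cons_eq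
        (Multiset.map_injective (add_left_injective 1) ((Multiset.cons_inj_right _).mp h))]

section Sorting

variable {α : Type*} [LinearOrder α]

noncomputable def sortDesc (f : Fin n → α) : Fin n → α :=
  f ∘ ⇑(Tuple.sort f * Fin.revPerm (n := n))

lemma antitone_sortDesc (f : Fin n → α) : Antitone (sortDesc f) :=
  (Tuple.monotone_sort f).comp_antitone Fin.rev_anti

lemma ofFn_sortDesc_perm (f : Fin n → α) : (List.ofFn (sortDesc f)).Perm (List.ofFn f) :=
  Equiv.Perm.ofFn_comp_perm _ f

lemma sortDesc_eq_sortDesc_iff {f g : Fin n → α} :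
    sortDesc f = sortDesc g ↔ univ.val.map f = univ.val.map g := by
  rw [Fin.univ_val_map, Fin.univ_val_map, Multiset.coe_eq_coe]
  refine ⟨fun h => (ofFn_sortDesc_perm f).symm.trans (h ▸ ofFn_sortDesc_perm g), fun h => ?_⟩
  exact List.ofFn_injective <|
    ((ofFn_sortDesc_perm f).trans (h.trans (ofFn_sortDesc_perm g).symm)).eq_of_pairwise'
      (antitone_sortDesc f).sortedGE_ofFn.pairwise (antitone_sortDesc g).sortedGE_ofFn.pairwise

end Sorting

lemma isThresholdPartition_iff {d : Fin n → ℕ} :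
    IsThresholdPartition n d ↔
      ∃ G : SimpleGraph (Fin n), IsThreshold G ∧ d = sortDesc (degC G) := by
  constructor
  · rintro ⟨hd, G, hG, σ, hσ⟩
    obtain rfl : d = degC G ∘ σ := funext hσ
    exact ⟨G, hG, Tuple.unique_antitone hd (antitone_sortDesc (degC G))⟩
  · rintro ⟨G, hG, rfl⟩
    exact ⟨antitone_sortDesc _, G, hG, Tuple.sort (degC G) * Fin.revPerm, fun _ => rfl⟩

/-- there are exactly `2^(n-1)` threshold partitions of length `n ≥ 1`. -/
theorem card_threshold_partitions (n : ℕ) (hn : 1 ≤ n) :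
    {d : Fin n → ℕ | IsThresholdPartition n d}.ncard = 2 ^ (n - 1) := by
  obtain ⟨m, rfl⟩ := Nat.exists_eq_add_of_le' hn
  set F : (Fin m → Bool) → Fin (m + 1) → ℕ :=
    fun τ => sortDesc (degC (creationGraph (Fin.cons false τ)))
  have hrange : {d | IsThresholdPartition (m + 1) d} = Set.range F := by
    ext d
    simp only [Set.mem_ofPred_eq, isThresholdPartition_iff, Set.mem_range]
    constructor
    · rintro ⟨G, hG, rfl⟩
      obtain ⟨ε, hε⟩ := hG.exists_degMult_eq_creationGraph
      refine ⟨Fin.tail ε, show sortDesc _ = _ from ?_⟩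
      rw [creationGraph_eq_of_tail_eq (Fin.tail_cons _ _), sortDesc_eq_sortDesc_iff]
      exact hε.symm
    · rintro ⟨τ, rfl⟩
      exact ⟨_, isThreshold_creationGraph _, rfl⟩
  have hinj : Function.Injective F := fun τ₁ τ₂ h =>
    eq_of_degMult_creationGraph_cons_eq (sortDesc_eq_sortDesc_iff.mp h)
  rw [hrange, Set.ncard_range_of_injective hinj, Nat.card_eq_fintype_card]
  simp
end

section
/- Let T = ([n], E) be a simple graph on vertex set [n] whose edge set E is an order ideal of S(n), the poset of 2-element subsets (i,j), i < j, of [n] ordered componentwise. Then there exist real numbers b_1 ≥ b_2 ≥ ... ≥ b_n such that (i,j) ∈ E if and only if b_i + b_j ≥ 0. -/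
/-- `E` is a set of edges `(i,j)`, `i < j`, of `[n]` forming an order ideal of the
poset `S(n)` of 2-element subsets of `[n]` ordered componentwise. -/
def IsIdealPairs (n : ℕ) (E : Finset (Fin n × Fin n)) : Prop :=
  (∀ e ∈ E, e.1 < e.2) ∧
  ∀ p q : Fin n × Fin n, q ∈ E → p.1 < p.2 → p.1 ≤ q.1 → p.2 ≤ q.2 → p ∈ E

/-- The degree of vertex `v` in the graph on `[n]` with edge set `E`. -/
def pdeg {n : ℕ} (E : Finset (Fin n × Fin n)) (v : Fin n) : ℕ :=
  (E.filter (fun e => e.1 = v ∨ e.2 = v)).card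

/-- The neighbor set of `i`. -/
def Nb {n : ℕ} (E : Finset (Fin n × Fin n)) (i : Fin n) : Finset (Fin n) :=
  Finset.univ.filter (fun k => (i, k) ∈ E ∨ (k, i) ∈ E)

lemma mem_Nb {n : ℕ} {E : Finset (Fin n × Fin n)} {i k : Fin n} :
    k ∈ Nb E i ↔ (i, k) ∈ E ∨ (k, i) ∈ E := by
  simp [Nb]

lemma pdeg_eq_card_Nb {n : ℕ} {E : Finset (Fin n × Fin n)}
    (h : IsIdealPairs n E) (i : Fin n) : pdeg E i = (Nb E i).card := by
  unfold pdeg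
  apply Finset.card_bij' (fun e _ => if e.1 = i then e.2 else e.1)
    (fun k _ => if i < k then (i, k) else (k, i))
  · intro e he
    rw [Finset.mem_filter] at he
    obtain ⟨heE, hcase⟩ := he
    rcases hcase with h1 | h2
    · rw [if_pos h1, mem_Nb]
      left; rw [← h1]; exact heE
    · have hlt := h.1 e heE
      have hne : e.1 ≠ i := ne_of_lt (h2 ▸ hlt)
      rw [if_neg hne, mem_Nb]
      right; rw [← h2]; exact heE
  · intro k hk
    rw [mem_Nb] at hk
    rcases hk with h1 | h2
    · have hlt : i < k := h.1 _ h1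
      rw [if_pos hlt]
      exact Finset.mem_filter.mpr ⟨h1, Or.inl rfl⟩
    · have hlt : k < i := h.1 _ h2
      rw [if_neg (not_lt.mpr hlt.le)]
      exact Finset.mem_filter.mpr ⟨h2, Or.inr rfl⟩
  · intro e he
    rw [Finset.mem_filter] at he
    obtain ⟨heE, hcase⟩ := he
    have hlt := h.1 e heE
    rcases hcase with h1 | h2
    · rw [if_pos h1]
      rw [if_pos (h1 ▸ hlt)]
      exact Prod.ext h1.symm rfl
    · have hne : e.1 ≠ i := ne_of_lt (h2 ▸ hlt)
      rw [if_neg hne]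
      rw [if_neg (not_lt.mpr (le_of_lt (h2 ▸ hlt)))]
      exact Prod.ext rfl h2.symm
  · intro k hk
    rw [mem_Nb] at hk
    rcases hk with h1 | h2
    · have hlt : i < k := h.1 _ h1
      simp [if_pos hlt]
    · have hlt : k < i := h.1 _ h2
      have : ¬ i < k := not_lt.mpr hlt.le
      simp [this, ne_of_lt hlt]

lemma edge_deg_bounds {n : ℕ} {E : Finset (Fin n × Fin n)}
    (h : IsIdealPairs n E) {i j : Fin n} (hij : i < j) (he : (i, j) ∈ E) :
    j.val ≤ pdeg E i ∧ i.val + 1 ≤ pdeg E j := by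
  constructor
  · rw [pdeg_eq_card_Nb h]
    have hsub : (Finset.Iic j).erase i ⊆ Nb E i := by
      intro k hk
      rw [Finset.mem_erase, Finset.mem_Iic] at hk
      obtain ⟨hne, hle⟩ := hk
      rw [mem_Nb]
      rcases lt_or_gt_of_ne hne with hlt | hgt
      · right
        exact h.2 (k, i) (i, j) he hlt hlt.le hij.le
      · left
        exact h.2 (i, k) (i, j) he hgt le_rfl hle
    have hc : ((Finset.Iic j).erase i).card = j.val := by
      rw [Finset.card_erase_of_mem (Finset.mem_Iic.mpr hij.le), Fin.card_Iic]
      omega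
    exact hc ▸ Finset.card_le_card hsub
  · rw [pdeg_eq_card_Nb h]
    have hsub : Finset.Iic i ⊆ Nb E j := by
      intro k hk
      rw [Finset.mem_Iic] at hk
      rw [mem_Nb]
      right
      exact h.2 (k, j) (i, j) he (lt_of_le_of_lt hk hij) hk le_rfl
    calc i.val + 1 = (Finset.Iic i).card := (Fin.card_Iic i).symm
         _ ≤ _ := Finset.card_le_card hsub

lemma nonedge_deg_bounds {n : ℕ} {E : Finset (Fin n × Fin n)}
    (h : IsIdealPairs n E) {i j : Fin n} (hij : i < j) (he : (i, j) ∉ E) :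
    pdeg E i + 1 ≤ j.val ∧ pdeg E j ≤ i.val := by
  constructor
  · rw [pdeg_eq_card_Nb h]
    have hsub : Nb E i ⊆ (Finset.Iio j).erase i := by
      intro k hk
      rw [mem_Nb] at hk
      rw [Finset.mem_erase, Finset.mem_Iio]
      rcases hk with h1 | h2
      · have hik : i < k := h.1 _ h1
        refine ⟨ne_of_gt hik, ?_⟩
        by_contra hc
        push_neg at hc
        exact he (h.2 (i, j) (i, k) h1 hij le_rfl hc)
      · have hki : k < i := h.1 _ h2
        exact ⟨ne_of_lt hki, hki.trans hij⟩
    have hcard : ((Finset.Iio j).erase i).card = j.val - 1 := by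
      rw [Finset.card_erase_of_mem (Finset.mem_Iio.mpr hij), Fin.card_Iio]
    have h1 : (Nb E i).card ≤ j.val - 1 := hcard ▸ Finset.card_le_card hsub
    have : (0 : ℕ) < j.val := lt_of_le_of_lt (Nat.zero_le _) hij
    omega
  · rw [pdeg_eq_card_Nb h]
    have hsub : Nb E j ⊆ Finset.Iio i := by
      intro k hk
      rw [mem_Nb] at hk
      rw [Finset.mem_Iio]
      rcases hk with h1 | h2
      · exact absurd (h.2 (i, j) (j, k) h1 hij hij.le (h.1 _ h1).le) he
      · have hkj : k < j := h.1 _ h2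
        by_contra hc
        push_neg at hc
        exact he (h.2 (i, j) (k, j) h2 hij hc le_rfl)
    calc (Nb E j).card ≤ (Finset.Iio i).card := Finset.card_le_card hsub
         _ = i.val := Fin.card_Iio i

lemma deg_antitone {n : ℕ} {E : Finset (Fin n × Fin n)}
    (h : IsIdealPairs n E) {i i' : Fin n} (hle : i ≤ i') :
    pdeg E i' ≤ pdeg E i + (i'.val - i.val) := by
  rw [pdeg_eq_card_Nb h, pdeg_eq_card_Nb h]
  have hsub : Nb E i' ⊆ Nb E i ∪ Finset.Ico i i' := by
    intro k hk
    rw [mem_Nb] at hk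
    rw [Finset.mem_union, mem_Nb, Finset.mem_Ico]
    rcases hk with h1 | h2
    · have hlt : i' < k := h.1 _ h1
      left; left
      exact h.2 (i, k) (i', k) h1 (lt_of_le_of_lt hle hlt) hle le_rfl
    · have hlt : k < i' := h.1 _ h2
      rcases lt_or_ge k i with hki | hik
      · left; right
        exact h.2 (k, i) (k, i') h2 hki le_rfl hle
      · right; exact ⟨hik, hlt⟩
  calc (Nb E i').card ≤ (Nb E i ∪ Finset.Ico i i').card := Finset.card_le_card hsub
    _ ≤ (Nb E i).card + (Finset.Ico i i').card := Finset.card_union_le _ _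
    _ = (Nb E i).card + (i'.val - i.val) := by rw [Fin.card_Ico]

/-- an order-ideal edge set admits weakly decreasing vertex weights
`b` with `(i,j) ∈ E ↔ b i + b j ≥ 0`. -/
theorem ideal_has_threshold_weights (n : ℕ) (E : Finset (Fin n × Fin n))
    (h : IsIdealPairs n E) :
    ∃ b : Fin n → ℝ, Antitone b ∧
      ∀ p : Fin n × Fin n, p.1 < p.2 → (p ∈ E ↔ 0 ≤ b p.1 + b p.2) := by
  refine ⟨fun k => (pdeg E k : ℝ) - (k.val : ℝ), ?_, ?_⟩
  · intro i i' hle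
    have h1 := deg_antitone h hle
    have h2 : i.val ≤ i'.val := hle
    have : pdeg E i' + i.val ≤ pdeg E i + i'.val := by omega
    have := (Nat.cast_le (α := ℝ)).mpr this
    push_cast at this
    simp only
    linarith
  · rintro ⟨i, j⟩ hij
    simp only at hij ⊢
    constructor
    · intro he
      obtain ⟨h1, h2⟩ := edge_deg_bounds h hij he
      have h1' := (Nat.cast_le (α := ℝ)).mpr h1
      have h2' := (Nat.cast_le (α := ℝ)).mpr h2
      push_cast at h1' h2'
      linarith
    · intro hsum
      by_contra he
      obtain ⟨h1, h2⟩ := nonedge_deg_bounds h hij he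
      have h1' := (Nat.cast_le (α := ℝ)).mpr h1
      have h2' := (Nat.cast_le (α := ℝ)).mpr h2
      push_cast at h1' h2'
      linarith
end

section
/- Two order ideals E, E' of S(n) with equal degree sequences are equal. That is, the map sending an order ideal of S(n) to the degree sequence of the graph ([n], E) is injective. -/
open Finset

lemma downset_iff (t : Finset ℕ) (hd : ∀ a ∈ t, ∀ b < a, b ∈ t) (a : ℕ) :
    a ∈ t ↔ a < t.card := by
  constructor
  · intro ha
    have hsub : Finset.range (a + 1) ⊆ t := by
      intro b hb
      rw [Finset.mem_range] at hb
      rcases Nat.lt_succ_iff_lt_or_eq.mp hb with hb | rfl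
      · exact hd a ha b hb
      · exact ha
    have := Finset.card_le_card hsub
    simpa using this
  · intro ha
    by_contra hna
    have hsub : t ⊆ Finset.range a := by
      intro b hb
      rw [Finset.mem_range]
      by_contra hba
      push_neg at hba
      rcases eq_or_lt_of_le hba with rfl | hab
      · exact hna hb
      · exact hna (hd b hb a hab)
    have := Finset.card_le_card hsub
    simp at this
    omega

def colSet {n : ℕ} (E : Finset (Fin n × Fin n)) (j : Fin n) : Finset ℕ :=
  (Finset.univ.filter (fun i : Fin n => (i, j) ∈ E)).image Fin.val

def cdeg {n : ℕ} (E : Finset (Fin n × Fin n)) (j : Fin n) : ℕ := (colSet E j).card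

lemma colSet_mem {n : ℕ} (E : Finset (Fin n × Fin n)) (j i : Fin n) :
    i.val ∈ colSet E j ↔ (i, j) ∈ E := by
  simp only [colSet, Finset.mem_image, Finset.mem_filter, Finset.mem_univ, true_and]
  constructor
  · rintro ⟨a, ha, hval⟩
    rwa [Fin.val_injective hval] at ha
  · intro hi
    exact ⟨i, hi, rfl⟩

lemma colSet_down {n : ℕ} {E : Finset (Fin n × Fin n)} (hE : IsIdealPairs n E) (j : Fin n) :
    ∀ a ∈ colSet E j, ∀ b < a, b ∈ colSet E j := by
  intro a ha b hb
  simp only [colSet, Finset.mem_image, Finset.mem_filter, Finset.mem_univ, true_and] at ha ⊢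
  obtain ⟨i, hi, rfl⟩ := ha
  have hij : i < j := hE.1 _ hi
  refine ⟨⟨b, lt_trans hb i.isLt⟩, ?_, rfl⟩
  refine hE.2 (⟨b, lt_trans hb i.isLt⟩, j) (i, j) hi ?_ (le_of_lt hb) le_rfl
  exact lt_trans (show (⟨b, lt_trans hb i.isLt⟩ : Fin n) < i from hb) hij

lemma mem_iff_cdeg {n : ℕ} {E : Finset (Fin n × Fin n)} (hE : IsIdealPairs n E) (i j : Fin n) :
    (i, j) ∈ E ↔ i.val < cdeg E j := by
  rw [← colSet_mem, downset_iff _ (colSet_down hE j), cdeg]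

lemma cdeg_le {n : ℕ} {E : Finset (Fin n × Fin n)} (hE : IsIdealPairs n E) (j : Fin n) :
    cdeg E j ≤ j.val := by
  have hsub : colSet E j ⊆ Finset.range j.val := by
    intro a ha
    simp only [colSet, Finset.mem_image, Finset.mem_filter, Finset.mem_univ, true_and] at ha
    obtain ⟨i, hi, rfl⟩ := ha
    exact Finset.mem_range.mpr (hE.1 _ hi)
  have := Finset.card_le_card hsub
  simpa [cdeg] using this

lemma pdeg_eq {n : ℕ} {E : Finset (Fin n × Fin n)} (hE : IsIdealPairs n E) (v : Fin n) :
    pdeg E v = (Finset.univ.filter fun j : Fin n => v.val < cdeg E j).card + cdeg E v := by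
  have hdisj : Disjoint (E.filter fun e => e.1 = v) (E.filter fun e => e.2 = v) := by
    rw [Finset.disjoint_left]
    intro e he1 he2
    simp only [Finset.mem_filter] at he1 he2
    have := hE.1 e he1.1
    rw [he1.2, he2.2] at this
    exact lt_irrefl v this
  have hsplit : pdeg E v
      = (E.filter fun e => e.1 = v).card + (E.filter fun e => e.2 = v).card := by
    rw [pdeg, Finset.filter_or, Finset.card_union_of_disjoint hdisj]
  have hc1 : (E.filter fun e => e.1 = v).card
      = (Finset.univ.filter fun j : Fin n => v.val < cdeg E j).card := by
    apply Finset.card_bij' (fun e _ => e.2) (fun j _ => (v, j))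
    · intro e he
      simp only [Finset.mem_filter, Finset.mem_univ, true_and] at he ⊢
      rw [← mem_iff_cdeg hE, ← he.2]
      exact he.1
    · intro e he
      simp only [Finset.mem_filter] at he
      exact Prod.ext he.2.symm rfl
    · intro j hj
      rfl
    · intro j hj
      simp only [Finset.mem_filter, Finset.mem_univ, true_and] at hj
      simp only [Finset.mem_filter]
      exact ⟨(mem_iff_cdeg hE v j).mpr hj, trivial⟩
  have hc2 : (E.filter fun e => e.2 = v).card = cdeg E v := by
    rw [cdeg, colSet, Finset.card_image_of_injective _ Fin.val_injective]
    apply Finset.card_bij' (fun e _ => e.1) (fun i _ => (i, v))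
    · intro e he
      simp only [Finset.mem_filter, Finset.mem_univ, true_and] at he ⊢
      rw [← he.2]
      exact he.1
    · intro e he
      simp only [Finset.mem_filter] at he
      exact Prod.ext rfl he.2.symm
    · intro i hi
      rfl
    · intro i hi
      simp only [Finset.mem_filter, Finset.mem_univ, true_and] at hi
      simp only [Finset.mem_filter]
      exact ⟨hi, trivial⟩
  rw [hsplit, hc1, hc2]

/-- two order ideals of `S(n)` with equal degree sequences coincide. -/
theorem ideal_degree_injective (n : ℕ) (E E' : Finset (Fin n × Fin n))
    (h1 : IsIdealPairs n E) (h2 : IsIdealPairs n E')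
    (h : ∀ v, pdeg E v = pdeg E' v) : E = E' := by
  have step : ∀ v : Fin n, (∀ j, v < j → cdeg E j = cdeg E' j) → cdeg E v = cdeg E' v := by
    intro v hv
    have hd := h v
    rw [pdeg_eq h1 v, pdeg_eq h2 v] at hd
    have hfil : (Finset.univ.filter fun j : Fin n => v.val < cdeg E j)
        = (Finset.univ.filter fun j : Fin n => v.val < cdeg E' j) := by
      apply Finset.filter_congr
      intro j _
      have hjc : v.val < cdeg E j → v < j := fun hc => by
        have := cdeg_le h1 j
        exact Fin.lt_def.mpr (by omega)
      have hjc' : v.val < cdeg E' j → v < j := fun hc => by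
        have := cdeg_le h2 j
        exact Fin.lt_def.mpr (by omega)
      constructor
      · intro hc
        rwa [← hv j (hjc hc)]
      · intro hc
        rwa [hv j (hjc' hc)]
    rw [hfil] at hd
    omega
  have key : ∀ m : ℕ, ∀ v : Fin n, n - v.val = m → cdeg E v = cdeg E' v := by
    intro m
    induction m using Nat.strong_induction_on with
    | _ m ih =>
      intro v hv
      apply step
      intro j hj
      exact ih (n - j.val) (by omega) j rfl
  have hcd : ∀ v, cdeg E v = cdeg E' v := fun v => key (n - v.val) v rfl
  ext ⟨i, j⟩
  rw [mem_iff_cdeg h1, mem_iff_cdeg h2, hcd j]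
end

section
/- For any real vector c ∈ ℝ^n, there exists t with 0 ≤ t ≤ n−1 such that 𝒜^t(c) is weakly decreasing, where 𝒜 is the operation of averaging over ascending runs. -/
open scoped Classical

/-- The set of indices lying in the same ascending run of `c` as `i`:
all `j` such that every consecutive step between `i` and `j` is a weak ascent. -/
noncomputable def runBlock {n : ℕ} (c : Fin n → ℝ) (i : Fin n) : Finset (Fin n) :=
  Finset.univ.filter (fun j =>
    ∀ (k : ℕ) (h1 : k < n) (h2 : k + 1 < n),
      min i.val j.val ≤ k → k + 1 ≤ max i.val j.val → c ⟨k, h1⟩ ≤ c ⟨k + 1, h2⟩)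

/-- The averaging map `𝒜`: replace each entry of `c` by the arithmetic mean of
the entries of the ascending run containing it. -/
noncomputable def avgMap {n : ℕ} (c : Fin n → ℝ) : Fin n → ℝ :=
  fun i => (∑ j ∈ runBlock c i, c j) / (runBlock c i).card

/-- The descent set of `c`, as a finset of natural numbers. -/
noncomputable def desSet {n : ℕ} (c : Fin n → ℝ) : Finset ℕ :=
  (Finset.range n).filter fun k =>
    ∃ (h1 : k < n) (h2 : k + 1 < n), c ⟨k + 1, h2⟩ < c ⟨k, h1⟩

lemma runBlock_succ_eq {n : ℕ} (c : Fin n → ℝ) (k : ℕ) (h1 : k < n) (h2 : k + 1 < n)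
    (hle : c ⟨k, h1⟩ ≤ c ⟨k + 1, h2⟩) :
    runBlock c ⟨k, h1⟩ = runBlock c ⟨k + 1, h2⟩ := by
  ext j
  simp only [runBlock, Finset.mem_filter, Finset.mem_univ, true_and]
  constructor
  · intro H m hm1 hm2 hmin hmax
    by_cases hmk : m = k
    · subst hmk; exact hle
    · exact H m hm1 hm2 (by simp at hmin hmax ⊢; omega) (by simp at hmin hmax ⊢; omega)
  · intro H m hm1 hm2 hmin hmax
    by_cases hmk : m = k
    · subst hmk; exact hle
    · exact H m hm1 hm2 (by simp at hmin hmax ⊢; omega) (by simp at hmin hmax ⊢; omega)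

lemma avgMap_succ_eq {n : ℕ} (c : Fin n → ℝ) (k : ℕ) (h1 : k < n) (h2 : k + 1 < n)
    (hle : c ⟨k, h1⟩ ≤ c ⟨k + 1, h2⟩) :
    avgMap c ⟨k, h1⟩ = avgMap c ⟨k + 1, h2⟩ := by
  unfold avgMap
  rw [runBlock_succ_eq c k h1 h2 hle]

lemma antitone_of_adj {n : ℕ} (c : Fin n → ℝ)
    (h : ∀ (k : ℕ) (h1 : k < n) (h2 : k + 1 < n), c ⟨k + 1, h2⟩ ≤ c ⟨k, h1⟩) :
    Antitone c := by
  have key : ∀ (d : ℕ) (i j : Fin n), i.val + d = j.val → c j ≤ c i := by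
    intro d
    induction d with
    | zero => intro i j hij; have : i = j := Fin.ext (by omega); subst this; exact le_refl _
    | succ d ih =>
      intro i j hij
      have hi1 : i.val + 1 < n := by omega
      have step : c ⟨i.val + 1, hi1⟩ ≤ c i := by
        have := h i.val i.isLt hi1
        simpa using this
      exact le_trans (ih ⟨i.val + 1, hi1⟩ j (by simp; omega)) step
  intro i j hij
  exact key (j.val - i.val) i j (by omega)

lemma exists_adj_ascent {n : ℕ} (c : Fin n → ℝ) (h : ¬ Antitone c) :
    ∃ (k : ℕ) (h1 : k < n) (h2 : k + 1 < n), c ⟨k, h1⟩ < c ⟨k + 1, h2⟩ := by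
  by_contra hc
  push_neg at hc
  exact h (antitone_of_adj c hc)

lemma desSet_avg_subset {n : ℕ} (c : Fin n → ℝ) : desSet (avgMap c) ⊆ desSet c := by
  intro k hk
  simp only [desSet, Finset.mem_filter, Finset.mem_range] at hk ⊢
  obtain ⟨hkn, h1, h2, hdes⟩ := hk
  refine ⟨hkn, h1, h2, ?_⟩
  by_contra hcon
  push_neg at hcon
  exact absurd (avgMap_succ_eq c k h1 h2 hcon) (by linarith)

lemma desSet_avg_ssubset {n : ℕ} (c : Fin n → ℝ) (h : ¬ Antitone (avgMap c)) :
    desSet (avgMap c) ⊂ desSet c := by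
  obtain ⟨k, h1, h2, hasc⟩ := exists_adj_ascent (avgMap c) h
  refine (Finset.ssubset_iff_of_subset (desSet_avg_subset c)).mpr ⟨k, ?_, ?_⟩
  · simp only [desSet, Finset.mem_filter, Finset.mem_range]
    refine ⟨h1, h1, h2, ?_⟩
    by_contra hcon
    push_neg at hcon
    exact absurd (avgMap_succ_eq c k h1 h2 hcon) (by linarith)
  · simp only [desSet, Finset.mem_filter, Finset.mem_range, not_and, not_exists]
    intro _ _ _
    linarith

lemma main_induction {n : ℕ} : ∀ (d : ℕ) (c : Fin n → ℝ), (desSet c).card ≤ d →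
    ∃ t ≤ d + 1, Antitone (avgMap^[t] c) := by
  intro d
  induction d with
  | zero =>
    intro c hc
    by_cases ha : Antitone c
    · exact ⟨0, by omega, ha⟩
    · by_cases hb : Antitone (avgMap c)
      · exact ⟨1, by omega, by simpa using hb⟩
      · have := Finset.card_lt_card (desSet_avg_ssubset c hb)
        omega
  | succ d ih =>
    intro c hc
    by_cases ha : Antitone c
    · exact ⟨0, by omega, ha⟩
    · by_cases hb : Antitone (avgMap c)
      · exact ⟨1, by omega, by simpa using hb⟩
      · have hlt := Finset.card_lt_card (desSet_avg_ssubset c hb)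
        obtain ⟨t, ht, hta⟩ := ih (avgMap c) (by omega)
        refine ⟨t + 1, by omega, ?_⟩
        rw [Function.iterate_succ_apply]
        exact hta

/-- some iterate `𝒜^t(c)` with `0 ≤ t ≤ n-1` is weakly decreasing. -/
theorem avgMap_iterate_antitone (n : ℕ) (c : Fin n → ℝ) :
    ∃ t : ℕ, t ≤ n - 1 ∧ Antitone (avgMap^[t] c) := by
  by_cases ha : Antitone c
  · exact ⟨0, by omega, ha⟩
  · obtain ⟨k, h1, h2, hasc⟩ := exists_adj_ascent c ha
    have hsub : desSet c ⊆ (Finset.range (n - 1)).erase k := by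
      intro m hm
      simp only [desSet, Finset.mem_filter, Finset.mem_range] at hm
      obtain ⟨hmn, hm1, hm2, hdes⟩ := hm
      rw [Finset.mem_erase, Finset.mem_range]
      constructor
      · rintro rfl
        exact absurd hdes (by linarith)
      · omega
    have hcard : (desSet c).card ≤ n - 2 := by
      have := Finset.card_le_card hsub
      rw [Finset.card_erase_of_mem (by rw [Finset.mem_range]; omega), Finset.card_range] at this
      omega
    obtain ⟨t, ht, hta⟩ := main_induction (n - 2) c hcard
    exact ⟨t, by omega, hta⟩
end

section
/- Let c ∈ ℝ^n with ascending runs indexed by blocks B_1,...,B_{k+1}, and let 𝒜(c) be the run-averaged vector. Then c − 𝒜(c) is a nonnegative linear combination of the vectors v_i = e_{i+1} − e_i over those indices i with i, i+1 in the same ascending run; specifically, c = 𝒜(c) + Σ_ℓ Σ_{i=m_ℓ}^{M_ℓ−1} [(i+1−m_ℓ) a_ℓ − (c_{m_ℓ}+...+c_i)] v_i, where m_ℓ, M_ℓ are the min and max index of block B_ℓ and a_ℓ is its average, and each coefficient (i+1−m_ℓ) a_ℓ − (c_{m_ℓ}+...+c_i) is nonnegative. -/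
open scoped Classical

/-- The coefficient `(i+1-m_ℓ)·a_ℓ - (c_{m_ℓ} + ⋯ + c_i)` attached to `v_i`,
where `m_ℓ` is the minimum index of the ascending run containing `i` and `a_ℓ`
is the run average:  the number of indices of the run that are `≤ i` times the
run average, minus the sum of the entries of the run at indices `≤ i`. -/
noncomputable def runCoeff {n : ℕ} (c : Fin n → ℝ) (i : Fin n) : ℝ :=
  (((runBlock c i).filter (fun j => j ≤ i)).card : ℝ) * avgMap c i -
    ∑ j ∈ (runBlock c i).filter (fun j => j ≤ i), c j

/-! Within an ascending run the entries increase, so a partial sum of the run lies below the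
corresponding multiple of the run average: this is the nonnegativity of the coefficients. The
decomposition is a telescoping identity: the coefficients of consecutive indices of a run differ
by `c j - a`, the coefficient at the first index of the run is `a - c j`, and the one at the last
index vanishes because it compares the whole run with its own average. -/

open Finset

/-- The average over a lower part of `s` is at most the average over `s`, denominators cleared. -/
theorem Finset.sum_filter_mul_card_le {ι R : Type*} [CommSemiring R] [PartialOrder R]
    [IsOrderedRing R] (s : Finset ι) (p : ι → Prop) [DecidablePred p] (f : ι → R)
    (h : ∀ i ∈ s, p i → ∀ j ∈ s, ¬ p j → f i ≤ f j) :
    (∑ i ∈ s with p i, f i) * #s ≤ #(s.filter p) * ∑ i ∈ s, f i := by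
  set P := s.filter p
  set Q := s.filter (fun i => ¬ p i)
  have cross : (∑ i ∈ P, f i) * #Q ≤ #P * ∑ j ∈ Q, f j := by
    calc (∑ i ∈ P, f i) * #Q = ∑ i ∈ P, ∑ _j ∈ Q, f i := by
          simp only [sum_const, nsmul_eq_mul, sum_mul, mul_comm]
      _ ≤ ∑ _i ∈ P, ∑ j ∈ Q, f j := by
          refine sum_le_sum fun i hi => sum_le_sum fun j hj => ?_
          rw [mem_filter] at hi hj
          exact h i hi.1 hi.2 j hj.1 hj.2
      _ = #P * ∑ j ∈ Q, f j := by simp only [sum_const, nsmul_eq_mul]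
  rw [← card_filter_add_card_filter_not p, ← sum_filter_add_sum_filter_not s p]
  push_cast
  rw [mul_add, mul_add, mul_comm (∑ i ∈ P, f i)]
  exact add_le_add_right cross _

section RunBlock

variable {n : ℕ} (c : Fin n → ℝ)

theorem mem_runBlock {i j : Fin n} :
    j ∈ runBlock c i ↔ ∀ (k : ℕ) (h1 : k < n) (h2 : k + 1 < n),
      min i.val j.val ≤ k → k + 1 ≤ max i.val j.val → c ⟨k, h1⟩ ≤ c ⟨k + 1, h2⟩ := by
  simp [runBlock]

theorem mem_runBlock_self (i : Fin n) : i ∈ runBlock c i := by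
  rw [mem_runBlock]
  intro k _ _ _ _
  omega

variable {c}

theorem mem_runBlock_comm {i j : Fin n} (h : j ∈ runBlock c i) : i ∈ runBlock c j := by
  rw [mem_runBlock] at h ⊢
  intro k h1 h2 hk1 hk2
  exact h k h1 h2 (by omega) (by omega)

theorem mem_runBlock_trans {i j k : Fin n} (hij : j ∈ runBlock c i) (hjk : k ∈ runBlock c j) :
    k ∈ runBlock c i := by
  rw [mem_runBlock] at hij hjk ⊢
  intro m h1 h2 hm1 hm2
  by_cases hjk' : min j.val k.val ≤ m ∧ m + 1 ≤ max j.val k.val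
  · exact hjk m h1 h2 hjk'.1 hjk'.2
  · exact hij m h1 h2 (by omega) (by omega)

theorem runBlock_eq_of_mem {i j : Fin n} (h : j ∈ runBlock c i) : runBlock c i = runBlock c j := by
  ext k
  exact ⟨mem_runBlock_trans (mem_runBlock_comm h), mem_runBlock_trans h⟩

theorem avgMap_eq_of_mem {i j : Fin n} (h : j ∈ runBlock c i) : avgMap c i = avgMap c j := by
  simp only [avgMap, runBlock_eq_of_mem h]

theorem mem_runBlock_of_le_of_le {i j : Fin n} (h : j ∈ runBlock c i) (k : Fin n)
    (hk₁ : min i.val j.val ≤ k) (hk₂ : k ≤ max i.val j.val) : k ∈ runBlock c i := by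
  rw [mem_runBlock] at h ⊢
  intro m h1 h2 hm1 hm2
  exact h m h1 h2 (by omega) (by omega)

theorem le_of_mem_runBlock {i j : Fin n} (h : j ∈ runBlock c i) (hij : i ≤ j) : c i ≤ c j := by
  rw [mem_runBlock] at h
  suffices ∀ m (hm : m < n), i.val ≤ m → m ≤ j.val → c i ≤ c ⟨m, hm⟩ from
    this j j.isLt hij le_rfl
  intro m hm him
  induction m, him using Nat.le_induction with
  | base => intro _; rfl
  | succ m _ ih =>
    intro hmj
    exact (ih (by omega) (by omega)).trans (h m _ hm (by omega) (by omega))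

theorem runBlock_monotoneOn (i : Fin n) : MonotoneOn c (runBlock c i) :=
  fun _ hj₁ _ hj₂ h => le_of_mem_runBlock (mem_runBlock_trans (mem_runBlock_comm hj₁) hj₂) h

end RunBlock

section RunCoeff

variable {n : ℕ} (c : Fin n → ℝ)

theorem runCoeff_nonneg (i : Fin n) : 0 ≤ runCoeff c i := by
  have hcard : (0 : ℝ) < #(runBlock c i) := by
    exact_mod_cast card_pos.mpr ⟨i, mem_runBlock_self c i⟩
  have key := sum_filter_mul_card_le (runBlock c i) (· ≤ i) c fun j hj hji k hk hki =>
    runBlock_monotoneOn i hj hk (hji.trans (le_of_not_ge hki))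
  rw [← le_div_iff₀ hcard, mul_div_assoc] at key
  rw [runCoeff, avgMap]
  linarith

theorem runCoeff_eq_zero_of_not_succ_mem (i : Fin n)
    (h : ¬ ∃ h : (i : ℕ) + 1 < n, (⟨(i : ℕ) + 1, h⟩ : Fin n) ∈ runBlock c i) :
    runCoeff c i = 0 := by
  have hle : ∀ j ∈ runBlock c i, j ≤ i := by
    intro j hj
    by_contra! hij
    have hi : (i : ℕ) + 1 < n := by omega
    exact h ⟨hi, mem_runBlock_of_le_of_le hj _ (by simp) (by simp; omega)⟩
  have hcard : (#(runBlock c i) : ℝ) ≠ 0 := by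
    exact_mod_cast (card_pos.mpr ⟨i, mem_runBlock_self c i⟩).ne'
  rw [runCoeff, avgMap, filter_true_of_mem hle]
  field_simp
  ring

theorem runCoeff_eq_of_succ_mem {i j : Fin n} (hj : (j : ℕ) = i + 1) (h : j ∈ runBlock c i) :
    runCoeff c i = runCoeff c j + (c j - avgMap c j) := by
  have hnotmem : j ∉ (runBlock c j).filter (· ≤ i) := by
    simp only [mem_filter, Fin.le_def]
    omega
  have hinsert : (runBlock c j).filter (· ≤ j) = insert j ((runBlock c j).filter (· ≤ i)) := by
    ext k
    simp only [mem_filter, mem_insert, Fin.le_def, Fin.ext_iff]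
    constructor
    · rintro ⟨hk, hkj⟩
      by_cases hkj' : (k : ℕ) = j
      · exact .inl hkj'
      · exact .inr ⟨hk, by omega⟩
    · rintro (hkj | ⟨hk, hki⟩)
      · exact ⟨Fin.ext hkj ▸ mem_runBlock_self c j, hkj.le⟩
      · exact ⟨hk, by omega⟩
  rw [runCoeff, runCoeff, runBlock_eq_of_mem h, avgMap_eq_of_mem h, hinsert,
    card_insert_of_notMem hnotmem, sum_insert hnotmem]
  push_cast
  ring

theorem runCoeff_eq_of_forall_pred_not_mem (j : Fin n)
    (h : ∀ i : Fin n, (j : ℕ) = i + 1 → j ∉ runBlock c i) :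
    runCoeff c j = avgMap c j - c j := by
  have hsingleton : (runBlock c j).filter (· ≤ j) = {j} := by
    ext k
    simp only [mem_filter, mem_singleton]
    refine ⟨fun ⟨hk, hkj⟩ => le_antisymm hkj ?_, ?_⟩
    swap
    · rintro rfl
      exact ⟨mem_runBlock_self c k, le_rfl⟩
    by_contra! hkj'
    have hj : (j : ℕ) - 1 < n := by omega
    exact h ⟨(j : ℕ) - 1, hj⟩ (by simp; omega) <| mem_runBlock_comm <|
      mem_runBlock_of_le_of_le hk _ (by simp; omega) (by simp)
  rw [runCoeff, hsingleton, card_singleton, sum_singleton]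
  push_cast
  ring

/-- Telescoping identity: the coefficient of `v_{j-1}` (zero when `j = 0`) differs from that of
`v_j` by `c j - avgMap c j`. -/
theorem sum_ite_succ_eq_runCoeff (j : Fin n) :
    ∑ i : Fin n, (if (j : ℕ) = i + 1 then runCoeff c i else 0) =
      runCoeff c j + (c j - avgMap c j) := by
  by_cases hpred : ∃ i : Fin n, (j : ℕ) = i + 1
  · obtain ⟨i, hi⟩ := hpred
    have hiff : ∀ i' : Fin n, (j : ℕ) = i' + 1 ↔ i = i' := fun i' => by
      rw [Fin.ext_iff]; omega
    simp only [hiff, sum_ite_eq, mem_univ, if_true]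
    by_cases hmem : j ∈ runBlock c i
    · exact runCoeff_eq_of_succ_mem c hi hmem
    · have hij : (⟨(i : ℕ) + 1, by omega⟩ : Fin n) = j := Fin.ext hi.symm
      rw [runCoeff_eq_zero_of_not_succ_mem c i (fun ⟨_, h⟩ => hmem (hij ▸ h)),
        runCoeff_eq_of_forall_pred_not_mem c j fun i' hi' => (hiff i').mp hi' ▸ hmem]
      ring
  · replace hpred := not_exists.mp hpred
    rw [sum_eq_zero fun i _ => if_neg (hpred i),
      runCoeff_eq_of_forall_pred_not_mem c j fun i hi => absurd hi (hpred i)]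
    ring

end RunCoeff

/-- `c = 𝒜(c) + Σ_i coeff_i · v_i`, summing over the indices `i`
such that `i` and `i+1` lie in the same ascending run, where
`v_i = e_{i+1} - e_i`, and each coefficient `coeff_i = runCoeff c i` is
nonnegative. -/
theorem avgMap_decomposition (n : ℕ) (c : Fin n → ℝ) :
    (∀ i ∈ Finset.univ.filter
        (fun i : Fin n => ∃ h : (i : ℕ) + 1 < n, (⟨(i : ℕ) + 1, h⟩ : Fin n) ∈ runBlock c i),
      0 ≤ runCoeff c i) ∧
    ∀ j : Fin n, c j = avgMap c j +
      ∑ i ∈ Finset.univ.filter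
        (fun i : Fin n => ∃ h : (i : ℕ) + 1 < n, (⟨(i : ℕ) + 1, h⟩ : Fin n) ∈ runBlock c i),
        runCoeff c i *
          ((if (j : ℕ) = (i : ℕ) + 1 then (1 : ℝ) else 0) - (if j = i then (1 : ℝ) else 0)) := by
  refine ⟨fun i _ => runCoeff_nonneg c i, fun j => ?_⟩
  -- the filter can be dropped, since `runCoeff` vanishes off it
  rw [sum_filter_of_ne fun i _ hi => not_not.mp fun h =>
    hi (by rw [runCoeff_eq_zero_of_not_succ_mem c i h, zero_mul])]
  simp only [mul_sub, mul_ite, mul_one, mul_zero, sum_sub_distrib, sum_ite_eq, mem_univ, if_true,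
    sum_ite_succ_eq_runCoeff]
  ring
end

section
/- If a and b are nonnegative integer sequences of length n, a is the degree sequence of an r-uniform hypergraph on [n], and b is obtained from a by a unit transformation (subtracting 1 from a coordinate a(i) and adding 1 to a coordinate a(j) where a(i) ≥ a(j) + 2), then b is also the degree sequence of an r-uniform hypergraph on [n]. -/
/-- The degree of vertex `v` in the hypergraph on `[n]` with edge set `E`. -/
def rdeg {n : ℕ} (E : Finset (Finset (Fin n))) (v : Fin n) : ℕ :=
  (E.filter (fun e => v ∈ e)).card

/-- `d` is the degree sequence of an `r`-uniform hypergraph on `[n]`. -/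
def IsRDegSeq (n r : ℕ) (d : Fin n → ℕ) : Prop :=
  ∃ E : Finset (Finset (Fin n)), (∀ e ∈ E, e.card = r) ∧ ∀ v, d v = rdeg E v

/-!
If `deg i > deg j`, then more edges contain `i` but not `j` than contain `j` but not `i`.
So the injection `e ↦ e - i + j` from the former to the latter kind of sets cannot land
inside `E`: some edge `e ∋ i` with `j ∉ e` has `e - i + j ∉ E`. Replacing `e` by
`e - i + j` keeps the hypergraph `r`-uniform and moves exactly one unit of degree from `i`
to `j`.
-/

open Finset

section ShiftEdge

variable {α : Type*} [DecidableEq α]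

def shiftEdge (i j : α) (e : Finset α) : Finset α :=
  insert j (e.erase i)

theorem mem_shiftEdge {i j v : α} {e : Finset α} :
    v ∈ shiftEdge i j e ↔ v = j ∨ v ≠ i ∧ v ∈ e := by
  simp [shiftEdge]

theorem card_shiftEdge {i j : α} {e : Finset α} (hi : i ∈ e) (hj : j ∉ e) :
    #(shiftEdge i j e) = #e := by
  rw [shiftEdge, card_insert_of_notMem (fun h => hj (mem_of_mem_erase h)),
    card_erase_add_one hi]

theorem shiftEdge_shiftEdge {i j : α} {e : Finset α} (hi : i ∈ e) (hj : j ∉ e) :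
    shiftEdge j i (shiftEdge i j e) = e := by
  rw [shiftEdge, shiftEdge, erase_insert (fun h => hj (mem_of_mem_erase h)), insert_erase hi]

end ShiftEdge

section Degree

variable {n : ℕ}

theorem rdeg_insert {E : Finset (Finset (Fin n))} {f : Finset (Fin n)} (hf : f ∉ E)
    (v : Fin n) : rdeg (insert f E) v = rdeg E v + if v ∈ f then 1 else 0 := by
  rw [rdeg, rdeg, filter_insert]
  split_ifs
  · exact card_insert_of_notMem (fun h => hf (mem_filter.mp h).1)
  · rfl

theorem rdeg_erase_add {E : Finset (Finset (Fin n))} {e : Finset (Fin n)} (he : e ∈ E)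
    (v : Fin n) : rdeg (E.erase e) v + (if v ∈ e then 1 else 0) = rdeg E v := by
  rw [rdeg, rdeg, filter_erase]
  split_ifs with hv
  · exact card_erase_add_one (mem_filter.mpr ⟨he, hv⟩)
  · have he' : e ∉ E.filter fun e => v ∈ e := fun h => hv (mem_filter.mp h).2
    rw [add_zero, erase_eq_of_notMem he']

theorem rdeg_eq_card_add_card (E : Finset (Finset (Fin n))) (i j : Fin n) :
    rdeg E i = #(E.filter fun e => i ∈ e ∧ j ∈ e) + #(E.filter fun e => i ∈ e ∧ j ∉ e) := by
  rw [rdeg, ← card_filter_add_card_filter_not (fun e => j ∈ e), filter_filter, filter_filter]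

theorem exists_shiftEdge_notMem_of_rdeg_lt {E : Finset (Finset (Fin n))} {i j : Fin n}
    (hij : i ≠ j) (hlt : rdeg E j < rdeg E i) :
    ∃ e ∈ E, i ∈ e ∧ j ∉ e ∧ shiftEdge i j e ∉ E := by
  by_contra! hclosed
  have hle : #(E.filter fun e => i ∈ e ∧ j ∉ e) ≤ #(E.filter fun e => j ∈ e ∧ i ∉ e) := by
    refine card_le_card_of_injOn (shiftEdge i j) (fun e he => ?_) (fun e he e' he' heq => ?_)
    · obtain ⟨hE, hi, hj⟩ := mem_filter.mp he
      simp [hclosed e hE hi hj, mem_shiftEdge, hij]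
    · obtain ⟨-, hi, hj⟩ := mem_filter.mp he
      obtain ⟨-, hi', hj'⟩ := mem_filter.mp he'
      rw [← shiftEdge_shiftEdge hi hj, ← shiftEdge_shiftEdge hi' hj', heq]
  have hcommon : #(E.filter fun e => j ∈ e ∧ i ∈ e) = #(E.filter fun e => i ∈ e ∧ j ∈ e) := by
    simp only [and_comm]
  have := rdeg_eq_card_add_card E i j
  have := rdeg_eq_card_add_card E j i
  omega

theorem rdeg_insert_erase_add {E : Finset (Finset (Fin n))} {e f : Finset (Fin n)}
    (he : e ∈ E) (hf : f ∉ E) (v : Fin n) :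
    rdeg (insert f (E.erase e)) v + (if v ∈ e then 1 else 0) =
      rdeg E v + if v ∈ f then 1 else 0 := by
  rw [rdeg_insert (fun h => hf (mem_of_mem_erase h)), ← rdeg_erase_add he v]
  omega

end Degree

/-- a unit transformation applied to the degree sequence of an
`r`-uniform hypergraph yields the degree sequence of an `r`-uniform hypergraph. -/
theorem unit_transformation_rgraphical (n r : ℕ) (a b : Fin n → ℕ)
    (ha : IsRDegSeq n r a) (i j : Fin n) (hij : i ≠ j)
    (hgap : a j + 2 ≤ a i)
    (hbi : b i = a i - 1) (hbj : b j = a j + 1)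
    (hbk : ∀ k, k ≠ i → k ≠ j → b k = a k) :
    IsRDegSeq n r b := by
  obtain ⟨E, hr, ha⟩ := ha
  obtain ⟨e, he, hi, hj, hshift⟩ :=
    exists_shiftEdge_notMem_of_rdeg_lt hij (by rw [← ha, ← ha]; omega)
  refine ⟨insert (shiftEdge i j e) (E.erase e), fun f hf => ?_, fun v => ?_⟩
  · rcases mem_insert.mp hf with rfl | hf
    · rw [card_shiftEdge hi hj, hr e he]
    · exact hr f (mem_of_mem_erase hf)
  · have hdeg := rdeg_insert_erase_add he hshift v
    rw [← ha] at hdeg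
    by_cases hvi : v = i
    · subst hvi
      simp only [mem_shiftEdge, hi, hij, ne_eq, not_true_eq_false, false_and, or_false,
        if_true, if_false] at hdeg
      omega
    by_cases hvj : v = j
    · subst hvj
      simp only [mem_shiftEdge, hj, true_or, if_true, if_false] at hdeg
      omega
    rw [hbk v hvi hvj]
    simp only [mem_shiftEdge, hvi, hvj, false_or, ne_eq, not_false_eq_true, true_and] at hdeg
    omega
end

section
/- A weakly decreasing nonnegative integer sequence d of length n is the degree partition of an r-uniform hypergraph on [n] if and only if d is majorized by the degree sequence of some r-ideal (an r-graph whose edge set is an order ideal of S(n,r)). -/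
/-- The componentwise order on same-size subsets of `[n]` (each written in
increasing order): `X ≤ Y` iff for every threshold `t`, `Y` has at least as many
elements `≥ t` as `X` does; for `#X = #Y` this says the `k`-th smallest element
of `X` is at most the `k`-th smallest element of `Y`, for every `k`. -/
def SetLE {n : ℕ} (X Y : Finset (Fin n)) : Prop :=
  ∀ t : Fin n, (X.filter (fun x => t ≤ x)).card ≤ (Y.filter (fun y => t ≤ y)).card

/-- `E` is an `r`-ideal: an `r`-uniform edge set which is an order ideal of
`S(n,r)` under the componentwise order. -/
def IsRIdeal (n r : ℕ) (E : Finset (Finset (Fin n))) : Prop :=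
  (∀ e ∈ E, e.card = r) ∧
  ∀ X Y : Finset (Fin n), Y ∈ E → X.card = r → SetLE X Y → X ∈ E

/-- The sum of the first `k` entries of `a`. -/
def psum {n : ℕ} (a : Fin n → ℕ) (k : ℕ) : ℕ :=
  ∑ i ∈ Finset.univ.filter (fun i : Fin n => (i : ℕ) < k), a i

/-- `a` majorizes `b`: after sorting both weakly decreasingly, every partial sum
of `a` dominates the corresponding partial sum of `b`, with equal total sums. -/
def Majorizes {n : ℕ} (a b : Fin n → ℕ) : Prop :=
  ∃ σ τ : Equiv.Perm (Fin n), Antitone (a ∘ σ) ∧ Antitone (b ∘ τ) ∧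
    (∀ k, k ≤ n → psum (b ∘ τ) k ≤ psum (a ∘ σ) k) ∧
    psum (a ∘ σ) n = psum (b ∘ τ) n

/-!
Only-if: UV-compressing an `r`-graph along `i < j` (replacing `j` by `i` in each edge where this
creates a new edge) moves degree from `j` to `i` so that the new degree of `i` is at least the old
degree of `j`; hence no sum of `k` largest degrees decreases, while the total is unchanged. The
potential `∑ v, v * deg v` strictly drops, so iterated compression ends in a family closed under all
such replacements, and such a family is an `r`-ideal because any `X ≤ Y` in `S(n,r)` is reached
from `Y` by a chain of them.

If: when `b` is majorized by `a`, both sorted decreasingly, `b` is reached from `a` by Robin Hood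
moves, each taking one unit from a larger entry to a smaller one while keeping the majorization; a
move from `u` to `v` with `deg v < deg u` is realized by replacing `u` by `v` in a single edge.
-/

open Finset

theorem sum_add_ite_eq_of_add_single {ι M : Type*} [DecidableEq ι] [AddCommMonoid M]
    {a a' : ι → M} {i j : ι} {t : M}
    (h : a' + Pi.single j t = a + Pi.single i t) (S : Finset ι) :
    ∑ w ∈ S, a' w + (if j ∈ S then t else 0) = ∑ w ∈ S, a w + (if i ∈ S then t else 0) := by
  have := congrArg (fun f => ∑ w ∈ S, f w) h
  simpa [sum_add_distrib, sum_pi_single'] using this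

section TopSum

variable {n : ℕ}

def topSum (a : Fin n → ℕ) (k : ℕ) : ℕ :=
  ({S | #S ≤ k} : Finset (Finset (Fin n))).sup fun S => ∑ i ∈ S, a i

theorem sum_le_topSum (a : Fin n → ℕ) {k : ℕ} {S : Finset (Fin n)} (hS : #S ≤ k) :
    ∑ i ∈ S, a i ≤ topSum a k :=
  le_sup (f := fun S => ∑ i ∈ S, a i) (by simpa using hS)

theorem topSum_le_iff {a : Fin n → ℕ} {k m : ℕ} :
    topSum a k ≤ m ↔ ∀ S : Finset (Fin n), #S ≤ k → ∑ i ∈ S, a i ≤ m := by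
  simp [topSum]

theorem topSum_comp_perm (a : Fin n → ℕ) (σ : Equiv.Perm (Fin n)) (k : ℕ) :
    topSum (a ∘ σ) k = topSum a k := by
  have key : ∀ (b : Fin n → ℕ) (π : Equiv.Perm (Fin n)), topSum (b ∘ π) k ≤ topSum b k := by
    refine fun b π => topSum_le_iff.2 fun S hS => ?_
    have : ∑ i ∈ S, b (π i) = ∑ i ∈ S.image π, b i := (sum_image (by simp)).symm
    exact this ▸ sum_le_topSum b (card_image_le.trans hS)
  refine (key a σ).antisymm ?_
  simpa [Function.comp_def] using key (a ∘ σ) σ⁻¹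

theorem psum_mono (a : Fin n → ℕ) : Monotone (psum a) :=
  fun _ _ hkl => sum_le_sum_of_subset fun i => by simpa using fun h => h.trans_le hkl

theorem psum_of_le (a : Fin n → ℕ) {k : ℕ} (hk : n ≤ k) : psum a k = ∑ i, a i := by
  unfold psum; congr 1; ext i; simp [i.isLt.trans_le hk]

theorem psum_succ (a : Fin n → ℕ) {k : ℕ} (hk : k < n) :
    psum a (k + 1) = psum a k + a ⟨k, hk⟩ := by
  have : ({i | (i : ℕ) < k + 1} : Finset (Fin n)) =
      insert ⟨k, hk⟩ ({i | (i : ℕ) < k} : Finset (Fin n)) := by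
    ext i; simp [Fin.ext_iff]; omega
  rw [psum, this, sum_insert (by simp), add_comm, psum]

theorem sum_le_psum_card {a : Fin n → ℕ} (ha : Antitone a) (S : Finset (Fin n)) :
    ∑ i ∈ S, a i ≤ psum a #S := by
  induction S using Finset.induction_on_max with
  | empty => simp [psum]
  | insert x T hlt ih =>
    have hTx : #T ≤ x := Fin.card_Iio x ▸ card_le_card fun i hi => mem_Iio.2 (hlt i hi)
    have hT : #T < n := hTx.trans_lt x.isLt
    rw [sum_insert fun hx => (hlt x hx).false, card_insert_of_notMem fun hx => (hlt x hx).false,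
      psum_succ a hT, add_comm]
    exact add_le_add ih (ha (Fin.le_def.2 hTx))

theorem psum_eq_topSum {a : Fin n → ℕ} (ha : Antitone a) (k : ℕ) : psum a k = topSum a k :=
  (sum_le_topSum a (by simp [Fin.card_filter_val_lt])).antisymm <| topSum_le_iff.2 fun S hS =>
    (sum_le_psum_card ha S).trans (psum_mono a hS)

theorem exists_perm_antitone_comp (a : Fin n → ℕ) : ∃ σ : Equiv.Perm (Fin n), Antitone (a ∘ σ) :=
  ⟨Fin.revPerm.trans (Tuple.sort a), fun _ _ hxy => Tuple.monotone_sort a (Fin.rev_le_rev.2 hxy)⟩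

theorem majorizes_of_topSum_le {a b : Fin n → ℕ} (h : ∀ k, topSum b k ≤ topSum a k)
    (hsum : ∑ i, a i = ∑ i, b i) : Majorizes a b := by
  obtain ⟨σ, hσ⟩ := exists_perm_antitone_comp a
  obtain ⟨τ, hτ⟩ := exists_perm_antitone_comp b
  refine ⟨σ, τ, hσ, hτ, fun k _ => ?_, ?_⟩
  · rw [psum_eq_topSum hσ, psum_eq_topSum hτ, topSum_comp_perm, topSum_comp_perm]
    exact h k
  · simpa [psum_of_le, Equiv.sum_comp] using hsum

theorem topSum_le_topSum_of_add_single {a a' : Fin n → ℕ} {i j : Fin n} {t : ℕ}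
    (h : a' + Pi.single j t = a + Pi.single i t) (hji : a j ≤ a' i) (k : ℕ) :
    topSum a k ≤ topSum a' k := by
  refine topSum_le_iff.2 fun S hS => ?_
  have hS' := sum_add_ite_eq_of_add_single h S
  by_cases hjS : j ∉ S
  · simp only [hjS, if_false] at hS'
    exact (by split_ifs at hS' <;> omega : _ ≤ _).trans (sum_le_topSum a' hS)
  rw [not_not] at hjS
  by_cases hiS : i ∈ S
  · simp only [hiS, hjS, if_true] at hS'
    exact (by omega : _ ≤ _).trans (sum_le_topSum a' hS)
  have hi' : i ∉ S.erase j := fun h => hiS (mem_of_mem_erase h)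
  have hrest := sum_add_ite_eq_of_add_single h (S.erase j)
  simp only [hi', notMem_erase, if_false, add_zero] at hrest
  have hcard : #(insert i (S.erase j)) ≤ k := by
    rw [card_insert_of_notMem hi', card_erase_add_one hjS]; exact hS
  calc ∑ w ∈ S, a w = a j + ∑ w ∈ S.erase j, a w := (add_sum_erase S a hjS).symm
    _ ≤ a' i + ∑ w ∈ S.erase j, a' w := by omega
    _ = ∑ w ∈ insert i (S.erase j), a' w := (sum_insert hi').symm
    _ ≤ topSum a' k := sum_le_topSum a' hcard

end TopSum

section Degrees

variable {n : ℕ}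

theorem rdeg_union {A B : Finset (Finset (Fin n))} (h : Disjoint A B) (w : Fin n) :
    rdeg (A ∪ B) w = rdeg A w + rdeg B w := by
  rw [rdeg, filter_union, card_union_of_disjoint (disjoint_filter_filter h)]; rfl

theorem rdeg_image_perm (E : Finset (Finset (Fin n))) (σ : Equiv.Perm (Fin n)) (v : Fin n) :
    rdeg (E.image (·.image σ)) v = rdeg E (σ.symm v) := by
  rw [rdeg, filter_image, card_image_of_injective _ (image_injective σ.injective), rdeg]
  congr 1
  refine filter_congr fun e _ => ?_
  simp [mem_image, ← Equiv.eq_symm_apply]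

theorem IsRDegSeq.comp_perm {r : ℕ} {d : Fin n → ℕ} (h : IsRDegSeq n r d)
    (σ : Equiv.Perm (Fin n)) : IsRDegSeq n r (d ∘ σ) := by
  obtain ⟨E, hE, hd⟩ := h
  refine ⟨E.image (·.image σ.symm), ?_, fun v => ?_⟩
  · simp only [mem_image, forall_exists_index, and_imp, forall_apply_eq_imp_iff₂]
    exact fun e he => (card_image_of_injective _ σ.symm.injective).trans (hE e he)
  · simp [rdeg_image_perm, hd]

theorem insert_erase_insert_erase {i j : Fin n} {a : Finset (Fin n)} (hj : j ∈ a) (hi : i ∉ a) :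
    insert j ((insert i (a.erase j)).erase i) = a := by
  rw [erase_insert fun h => hi (mem_of_mem_erase h), insert_erase hj]

theorem rdeg_sdiff_union_image {s M : Finset (Finset (Fin n))} {i j : Fin n} (hij : i ≠ j)
    (hM : M ⊆ s) (hMij : ∀ a ∈ M, j ∈ a ∧ i ∉ a) (hnew : ∀ a ∈ M, insert i (a.erase j) ∉ s) :
    rdeg ((s \ M) ∪ M.image (fun a => insert i (a.erase j))) + Pi.single j #M =
      rdeg s + Pi.single i #M := by
  have hinj : Set.InjOn (fun a : Finset (Fin n) => insert i (a.erase j)) M :=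
    Set.LeftInvOn.injOn (f₁' := fun b : Finset (Fin n) => insert j (b.erase i)) fun a ha =>
      insert_erase_insert_erase (hMij a ha).1 (hMij a ha).2
  have hdisj : Disjoint (s \ M) (M.image fun a : Finset (Fin n) => insert i (a.erase j)) :=
    disjoint_left.2 fun b hb hb' => by
      obtain ⟨a, ha, rfl⟩ := mem_image.1 hb'
      exact hnew a ha (mem_sdiff.1 hb).1
  funext w
  have hpt : ∀ a ∈ M, (if w ∈ insert i (a.erase j) then 1 else 0) + (if w = j then 1 else 0) =
      (if w ∈ a then 1 else 0) + (if w = i then 1 else 0) := by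
    intro a ha
    obtain ⟨hj, hi⟩ := hMij a ha
    by_cases hwi : w = i <;> by_cases hwj : w = j <;> simp_all
  have hsum := sum_congr rfl hpt
  simp only [sum_add_distrib, sum_boole, Nat.cast_id, filter_const, apply_ite card,
    card_empty] at hsum
  rw [Pi.add_apply, Pi.add_apply, rdeg_union hdisj, ← sdiff_union_of_subset hM,
    rdeg_union sdiff_disjoint, sdiff_union_of_subset hM, Pi.single_apply, Pi.single_apply]
  simp only [rdeg, filter_image] at hsum ⊢
  rw [card_image_of_injOn (hinj.mono (filter_subset _ _))]
  omega

end Degrees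

section Compression

open UV
open scoped FinsetFamily

variable {n : ℕ} {i j : Fin n}

theorem compress_singleton (hij : i ≠ j) (a : Finset (Fin n)) :
    compress {i} {j} a = if j ∈ a ∧ i ∉ a then insert i (a.erase j) else a := by
  by_cases h : j ∈ a ∧ i ∉ a
  · rw [compress_of_disjoint_of_le (by simpa using h.2) (by simpa using h.1), if_pos h]
    ext w; simp only [mem_sdiff, mem_insert, mem_erase, mem_singleton]; grind
  · rw [compress, if_neg (by simpa [and_comm] using h), if_neg h]

theorem compression_singleton (hij : i ≠ j) (s : Finset (Finset (Fin n))) :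
    𝓒 {i} {j} s = (s \ {a ∈ s | j ∈ a ∧ i ∉ a ∧ insert i (a.erase j) ∉ s}) ∪
      {a ∈ s | j ∈ a ∧ i ∉ a ∧ insert i (a.erase j) ∉ s}.image fun a => insert i (a.erase j) := by
  ext b
  simp only [mem_compression, compress_singleton hij, mem_union, mem_sdiff, mem_filter, mem_image]
  grind

theorem rdeg_le_rdeg_compression (hij : i ≠ j) (s : Finset (Finset (Fin n))) :
    rdeg s j ≤ rdeg (𝓒 {i} {j} s) i := by
  have hinj : Set.InjOn (compress {i} {j}) {a | j ∈ a} :=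
    Set.LeftInvOn.injOn (f₁' := fun b : Finset (Fin n) => if j ∈ b then b else insert j (b.erase i))
      fun a ha => by
        simp only [compress_singleton hij]
        split_ifs <;> simp_all
  calc rdeg s j = #({a ∈ s | j ∈ a}.image (compress {i} {j})) :=
        (card_image_of_injOn (hinj.mono fun a ha => (mem_filter.1 ha).2)).symm
    _ ≤ rdeg (𝓒 {i} {j} s) i := card_le_card fun b hb => by
        obtain ⟨a, ha, rfl⟩ := mem_image.1 hb
        refine mem_filter.2 ⟨compress_mem_compression (mem_filter.1 ha).1, ?_⟩
        rw [compress_singleton hij]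
        split_ifs with h
        · exact mem_insert_self i _
        · simp_all

theorem rdeg_compression_add_single (hij : i ≠ j) (s : Finset (Finset (Fin n))) :
    rdeg (𝓒 {i} {j} s) + Pi.single j #{a ∈ s | j ∈ a ∧ i ∉ a ∧ insert i (a.erase j) ∉ s} =
      rdeg s + Pi.single i #{a ∈ s | j ∈ a ∧ i ∉ a ∧ insert i (a.erase j) ∉ s} := by
  rw [compression_singleton hij]
  exact rdeg_sdiff_union_image hij (filter_subset _ _)
    (fun a ha => ⟨(mem_filter.1 ha).2.1, (mem_filter.1 ha).2.2.1⟩)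
    fun a ha => (mem_filter.1 ha).2.2.2

theorem exists_mem_insert_erase_notMem (hij : i ≠ j) {s : Finset (Finset (Fin n))}
    (hlt : rdeg s i < rdeg s j) : ∃ a ∈ s, j ∈ a ∧ i ∉ a ∧ insert i (a.erase j) ∉ s := by
  by_contra! h
  have hdeg := congr_fun (rdeg_compression_add_single hij s) i
  have hM : {a ∈ s | j ∈ a ∧ i ∉ a ∧ insert i (a.erase j) ∉ s} = ∅ :=
    filter_eq_empty_iff.2 fun a ha ⟨hj, hi, hnew⟩ => hnew (h a ha hj hi)
  simp only [hM, card_empty, Pi.single_zero, add_zero] at hdeg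
  exact (rdeg_le_rdeg_compression hij s).not_gt (hdeg ▸ hlt)

end Compression

section Ideal

variable {n : ℕ} {X Y : Finset (Fin n)}

theorem SetLE.card_filter_lt (h : SetLE X Y) (w : Fin n) :
    #{x ∈ X | w < x} ≤ #{y ∈ Y | w < y} := by
  rcases lt_or_ge ((w : ℕ) + 1) n with hw | hw
  · have hiff : ∀ x : Fin n, w < x ↔ ⟨w + 1, hw⟩ ≤ x := fun _ => Nat.lt_iff_add_one_le
    simpa only [hiff] using h ⟨w + 1, hw⟩
  · have hnot : ∀ x : Fin n, ¬ w < x := fun x => by rw [Fin.lt_def]; omega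
    simp [hnot]

theorem SetLE.card_filter_le_lt (h : SetLE X Y) {j t : Fin n} (hjY : j ∈ Y) (hjX : j ∉ X)
    (htj : t ≤ j) (hrun : ∀ w, t ≤ w → w < j → w ∈ Y) :
    #{x ∈ X | t ≤ x} < #{y ∈ Y | t ≤ y} := by
  set R : Finset (Fin n) := {w | t ≤ w ∧ w < j}
  have hX : {x ∈ X | t ≤ x} ⊆ R ∪ {x ∈ X | j < x} := fun x hx => by
    simp only [mem_filter, mem_union, mem_univ, true_and, R] at hx ⊢
    rcases lt_trichotomy x j with hxj | rfl | hxj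
    · exact Or.inl ⟨hx.2, hxj⟩
    · exact absurd hx.1 hjX
    · exact Or.inr ⟨hx.1, hxj⟩
  have hY : R ∪ insert j {y ∈ Y | j < y} ⊆ {y ∈ Y | t ≤ y} := fun y hy => by
    simp only [mem_filter, mem_union, mem_insert, mem_univ, true_and, R] at hy ⊢
    rcases hy with hy | rfl | hy
    · exact ⟨hrun y hy.1 hy.2, hy.1⟩
    · exact ⟨hjY, htj⟩
    · exact ⟨hy.1, htj.trans hy.2.le⟩
  have hdisj : Disjoint R (insert j {y ∈ Y | j < y}) := disjoint_left.2 fun w hw hw' => by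
    simp only [mem_filter, mem_insert, mem_univ, true_and, R] at hw hw'
    rcases hw' with rfl | hw' <;> order
  have h1 := (card_le_card hX).trans (card_union_le _ _)
  have h2 := card_le_card hY
  rw [card_union_of_disjoint hdisj, card_insert_of_notMem (by simp)] at h2
  have := h.card_filter_lt j
  omega

theorem card_filter_insert_erase_add {i j t : Fin n} (hiY : i ∉ Y) (hjY : j ∈ Y) :
    #{y ∈ insert i (Y.erase j) | t ≤ y} + (if t ≤ j then 1 else 0) =
      #{y ∈ Y | t ≤ y} + (if t ≤ i then 1 else 0) := by
  rw [filter_insert, filter_erase]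
  have hi : i ∉ ({y ∈ Y | t ≤ y} : Finset (Fin n)).erase j := fun h =>
    hiY (mem_filter.1 (mem_of_mem_erase h)).1
  split_ifs with hti htj htj
  · rw [card_insert_of_notMem hi, card_erase_add_one (mem_filter.2 ⟨hjY, htj⟩)]
  · rw [card_insert_of_notMem hi, erase_eq_of_notMem fun h => htj (mem_filter.1 h).2]
  · rw [card_erase_add_one (mem_filter.2 ⟨hjY, htj⟩)]; rfl
  · rw [erase_eq_of_notMem fun h => htj (mem_filter.1 h).2]

theorem SetLE.exists_insert_erase (h : SetLE X Y) (hcard : #X = #Y) (hne : X ≠ Y) :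
    ∃ i j, i < j ∧ j ∈ Y ∧ i ∉ Y ∧ SetLE X (insert i (Y.erase j)) := by
  obtain ⟨j, hj⟩ := sdiff_nonempty.2 fun hYX => hne (eq_of_subset_of_card_le hYX hcard.le).symm
  obtain ⟨hjY, hjX⟩ := mem_sdiff.1 hj
  have hgap : ({w | w < j ∧ w ∉ Y} : Finset (Fin n)).Nonempty := by
    by_contra! hempty
    have hrun : ∀ w, ⟨0, j.pos⟩ ≤ w → w < j → w ∈ Y := fun w _ hw =>
      by_contra fun hwY => filter_eq_empty_iff.1 hempty (mem_univ w) ⟨hw, hwY⟩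
    have := h.card_filter_le_lt hjY hjX (Fin.le_def.2 (Nat.zero_le _)) hrun
    simp [Fin.le_def, hcard] at this
  obtain ⟨i, hi, himax⟩ := exists_max_image _ id hgap
  simp only [mem_filter, mem_univ, true_and, id] at hi himax
  refine ⟨i, j, hi.1, hjY, hi.2, fun t => ?_⟩
  have hcnt := card_filter_insert_erase_add (t := t) hi.2 hjY
  by_cases hti : t ≤ i
  · have := h t
    simp only [hti, (hti.trans hi.1.le), if_true] at hcnt
    omega
  by_cases htj : t ≤ j
  · have hrun : ∀ w, t ≤ w → w < j → w ∈ Y := fun w htw hwj => by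
      by_contra hwY
      exact hti (htw.trans (himax w ⟨hwj, hwY⟩))
    have := h.card_filter_le_lt hjY hjX htj hrun
    simp only [hti, htj, if_true, if_false] at hcnt
    omega
  · have := h t
    simp only [hti, htj, if_false] at hcnt
    omega

theorem isRIdeal_of_forall_insert_erase_mem {r : ℕ} {E : Finset (Finset (Fin n))}
    (hE : ∀ e ∈ E, #e = r)
    (hshift : ∀ i j : Fin n, i < j → ∀ a ∈ E, j ∈ a → i ∉ a → insert i (a.erase j) ∈ E) :
    IsRIdeal n r E := by
  refine ⟨hE, fun X Y hY hX hXY => ?_⟩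
  induction hw : ∑ v ∈ Y, (v : ℕ) using Nat.strong_induction_on generalizing Y with
  | _ w ih =>
  by_cases hXY' : X = Y
  · exact hXY' ▸ hY
  obtain ⟨i, j, hij, hjY, hiY, hle⟩ := hXY.exists_insert_erase (hX.trans (hE Y hY).symm) hXY'
  have hi : i ∉ Y.erase j := fun h => hiY (mem_of_mem_erase h)
  have hsum : ∑ v ∈ insert i (Y.erase j), (v : ℕ) + j = ∑ v ∈ Y, (v : ℕ) + i := by
    rw [sum_insert hi, add_assoc, sum_erase_add _ _ hjY, add_comm]
  have hlt : ∑ v ∈ insert i (Y.erase j), (v : ℕ) < w := by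
    have : (i : ℕ) < j := hij
    omega
  exact ih _ hlt _ (hshift i j hij Y hY hjY hiY) hle rfl

end Ideal

section Shifting

open scoped FinsetFamily

variable {n r : ℕ}

theorem exists_isRIdeal_topSum_le (E : Finset (Finset (Fin n))) (hE : ∀ e ∈ E, #e = r) :
    ∃ F, IsRIdeal n r F ∧ (∀ k, topSum (rdeg E) k ≤ topSum (rdeg F) k) ∧
      ∑ v, rdeg F v = ∑ v, rdeg E v := by
  induction hw : ∑ v : Fin n, (v : ℕ) * rdeg E v using Nat.strong_induction_on generalizing E with
  | _ w ih =>
  by_cases hshift : ∀ i j : Fin n, i < j → ∀ a ∈ E, j ∈ a → i ∉ a → insert i (a.erase j) ∈ E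
  · exact ⟨E, isRIdeal_of_forall_insert_erase_mem hE hshift, fun _ => le_rfl, rfl⟩
  push Not at hshift
  obtain ⟨i, j, hij, a, ha, hja, hia, hnew⟩ := hshift
  set t := #{a ∈ E | j ∈ a ∧ i ∉ a ∧ insert i (a.erase j) ∉ E}
  have ht : 0 < t := card_pos.2 ⟨a, mem_filter.2 ⟨ha, hja, hia, hnew⟩⟩
  have hdeg := rdeg_compression_add_single hij.ne E
  have hweight : ∑ v : Fin n, (v : ℕ) * rdeg (𝓒 {i} {j} E) v + j * t =
      ∑ v : Fin n, (v : ℕ) * rdeg E v + i * t := by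
    simpa [mul_add, sum_add_distrib, Pi.single_apply] using
      congrArg (fun f : Fin n → ℕ => ∑ v : Fin n, (v : ℕ) * f v) hdeg
  have hlt : ∑ v : Fin n, (v : ℕ) * rdeg (𝓒 {i} {j} E) v < w := by
    have : (i : ℕ) * t < j * t := Nat.mul_lt_mul_of_pos_right hij ht
    omega
  obtain ⟨F, hF, htop, hsum⟩ := ih _ hlt _ (Set.Sized.uvCompression (by simp) hE) rfl
  refine ⟨F, hF, fun k => ?_, hsum.trans ?_⟩
  · exact (topSum_le_topSum_of_add_single hdeg (rdeg_le_rdeg_compression hij.ne E) k).trans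
      (htop k)
  · simpa using sum_add_ite_eq_of_add_single hdeg univ

theorem IsRDegSeq.exists_isRIdeal_majorizes {d : Fin n → ℕ} (h : IsRDegSeq n r d) :
    ∃ E, IsRIdeal n r E ∧ Majorizes (rdeg E) d := by
  obtain ⟨E, hE, hd⟩ := h
  obtain ⟨F, hF, htop, hsum⟩ := exists_isRIdeal_topSum_le E hE
  rw [funext hd]
  exact ⟨F, hF, majorizes_of_topSum_le htop hsum⟩

end Shifting

section RobinHood

variable {n r : ℕ} {a b : Fin n → ℕ}

theorem IsRDegSeq.of_add_single {u v : Fin n} (h : IsRDegSeq n r a) (hvu : a v < a u)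
    {a' : Fin n → ℕ} (ha' : a' + Pi.single u 1 = a + Pi.single v 1) : IsRDegSeq n r a' := by
  obtain ⟨E, hE, hd⟩ := h
  obtain rfl : a = rdeg E := funext hd
  have hvu' : v ≠ u := ne_of_apply_ne _ hvu.ne
  obtain ⟨e, he, hue, hve, hnew⟩ := exists_mem_insert_erase_notMem hvu' hvu
  have hdeg := rdeg_sdiff_union_image hvu' (singleton_subset_iff.2 he)
    (by simpa using ⟨hue, hve⟩) (by simpa using hnew)
  rw [card_singleton, ← ha'] at hdeg
  refine ⟨_, fun f hf => ?_, fun w => congr_fun (add_right_cancel hdeg).symm w⟩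
  simp only [image_singleton, mem_union, mem_sdiff, mem_singleton] at hf
  rcases hf with ⟨hf, -⟩ | rfl
  · exact hE f hf
  · rw [card_insert_of_notMem fun h => hve (mem_of_mem_erase h), card_erase_add_one hue,
      hE e he]

theorem exists_lt_lt_of_psum_le (hle : ∀ k ≤ n, psum b k ≤ psum a k)
    (htot : psum a n = psum b n) (hne : a ≠ b) :
    ∃ i j : Fin n, i < j ∧ b i < a i ∧ a j < b j ∧
      ∀ k : ℕ, i < k → k ≤ j → psum b k < psum a k := by
  have hex : ∃ j, a j < b j := by
    by_contra! h
    rw [psum_of_le a le_rfl, psum_of_le b le_rfl] at htot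
    exact hne <| funext fun j =>
      ((sum_eq_sum_iff_of_le fun j _ => h j).1 htot.symm j (mem_univ j)).symm
  obtain ⟨j, hj, hjmin⟩ := wellFounded_lt.has_min {j | a j < b j} hex
  have hpj : psum b j < psum a j := by
    have := hle (j + 1) j.isLt
    rw [psum_succ a j.isLt, psum_succ b j.isLt, Fin.eta] at this
    have : a j < b j := hj
    omega
  obtain ⟨i, hi, hba⟩ := exists_lt_of_sum_lt hpj
  have hij : i < j := by simpa using hi
  refine ⟨i, j, hij, hba, hj, fun k hik hkj => ?_⟩
  induction k, (hik : (i : ℕ) + 1 ≤ k) using Nat.le_induction with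
  | base =>
    have := hle i (by omega)
    rw [psum_succ a i.isLt, psum_succ b i.isLt, Fin.eta]
    omega
  | succ k hik ih =>
    have hk : k < n := by omega
    have hbak : b ⟨k, hk⟩ ≤ a ⟨k, hk⟩ :=
      not_lt.1 fun h => hjmin ⟨k, hk⟩ h (Fin.lt_def.2 (by simp; omega))
    rw [psum_succ a hk, psum_succ b hk]
    omega

theorem exists_antitone_add_single (ha : Antitone a) {i j : Fin n} (hgap : a j + 2 ≤ a i) :
    ∃ u v : Fin n, i ≤ u ∧ u < v ∧ v ≤ j ∧ a v < a u ∧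
      ∃ a' : Fin n → ℕ, a' + Pi.single u 1 = a + Pi.single v 1 ∧ Antitone a' := by
  obtain ⟨u, hu, humax⟩ := wellFounded_gt.has_min {m | a m = a i} ⟨i, rfl⟩
  obtain ⟨v, hv, hvmin⟩ := wellFounded_lt.has_min {m | a m = a j} ⟨j, rfl⟩
  simp only [Set.mem_ofPred_eq] at hu hv humax hvmin
  have hafter : ∀ q, u < q → a q < a u := fun q hq =>
    (ha hq.le).lt_of_ne fun h => humax q (h.trans hu) hq
  have hbefore : ∀ p, p < v → a v < a p := fun p hp =>
    (ha hp.le).lt_of_ne fun h => hvmin p (h.symm.trans hv) hp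
  have huv : u < v := lt_of_not_ge fun h => by have := ha h; omega
  refine ⟨u, v, not_lt.1 fun h => humax i rfl h, huv, not_lt.1 (hvmin j rfl), by omega,
    a + Pi.single v 1 - Pi.single u 1, ?_, fun p q hpq => ?_⟩
  · funext w
    simp only [Pi.add_apply, Pi.sub_apply, Pi.single_apply]
    split_ifs <;> subst_vars <;> omega
  · have hpq' := ha hpq
    rcases hpq.eq_or_lt with rfl | hlt
    · exact le_rfl
    have h1 : p = u → a q < a u := fun h => hafter q (h ▸ hlt)
    have h2 : q = v → a v < a p := fun h => hbefore p (h ▸ hlt)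
    simp only [Pi.add_apply, Pi.sub_apply, Pi.single_apply]
    split_ifs <;> subst_vars <;> omega

theorem IsRDegSeq.of_psum_le (ha : Antitone a) (hb : Antitone b)
    (hle : ∀ k ≤ n, psum b k ≤ psum a k) (htot : psum a n = psum b n) (h : IsRDegSeq n r a) :
    IsRDegSeq n r b := by
  induction hm : ∑ k ∈ range (n + 1), psum a k using Nat.strong_induction_on generalizing a with
  | _ m ih =>
  by_cases hab : a = b
  · exact hab ▸ h
  obtain ⟨i, j, hij, hi, hj, hpos⟩ := exists_lt_lt_of_psum_le hle htot hab
  obtain ⟨u, v, hiu, huv, hvj, hvu, a', ha'eq, ha'⟩ :=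
    exists_antitone_add_single ha (by have := hb hij.le; omega : a j + 2 ≤ a i)
  have hpsum (k : ℕ) :
      psum a' k + (if (u : ℕ) < k then 1 else 0) = psum a k + (if (v : ℕ) < k then 1 else 0) := by
    simpa [psum] using sum_add_ite_eq_of_add_single ha'eq {w | (w : ℕ) < k}
  have huv' : (u : ℕ) < v := huv
  refine ih _ ?_ ha' (fun k hk => ?_) ?_ (h.of_add_single hvu ha'eq) rfl
  · rw [← hm]
    refine sum_lt_sum (fun k _ => ?_) ⟨v, by simp, ?_⟩
    · have := hpsum k; split_ifs at this <;> omega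
    · have := hpsum v; simp only [lt_irrefl, huv', if_true, if_false] at this; omega
  · have h1 := hpsum k
    have h2 := hle k hk
    have h3 : (u : ℕ) < k → k ≤ v → psum b k < psum a k := fun huk hkv =>
      hpos k (lt_of_le_of_lt (Fin.le_def.1 hiu) huk) (hkv.trans hvj)
    split_ifs at h1 <;> omega
  · have := hpsum n
    simp only [u.isLt, v.isLt, if_true] at this
    omega

end RobinHood

theorem rgraphical_iff_majorized_by_ideal_general (n r : ℕ) (d : Fin n → ℕ) :
    IsRDegSeq n r d ↔
      ∃ E : Finset (Finset (Fin n)), IsRIdeal n r E ∧ Majorizes (rdeg E) d := by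
  refine ⟨IsRDegSeq.exists_isRIdeal_majorizes, ?_⟩
  rintro ⟨E, ⟨hE, -⟩, σ, τ, hσ, hτ, hle, htot⟩
  have hE' : IsRDegSeq n r (rdeg E) := ⟨E, hE, fun _ => rfl⟩
  simpa [Function.comp_def] using ((hE'.comp_perm σ).of_psum_le hσ hτ hle htot).comp_perm τ⁻¹

/-- a weakly decreasing nonnegative integer sequence is the degree
partition of an `r`-uniform hypergraph on `[n]` iff it is majorized by the degree
sequence of an `r`-ideal. -/
theorem rgraphical_iff_majorized_by_ideal (n r : ℕ) (d : Fin n → ℕ)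
    (hd : Antitone d) :
    IsRDegSeq n r d ↔
      ∃ E : Finset (Finset (Fin n)), IsRIdeal n r E ∧ Majorizes (rdeg E) d :=
  rgraphical_iff_majorized_by_ideal_general n r d
end

section
/- Let H = ([n], E) be an r-uniform hypergraph with degree sequence d. Then there exists an r-uniform hypergraph H'' on [n] whose edge set, after relabeling vertices in weakly decreasing order of degree, is an order ideal of S(n,r), and whose degree sequence majorizes d. -/
namespace HGAux
variable {n : ℕ}

lemma rev_antitone : Antitone (Fin.rev : Fin n → Fin n) :=
  fun _ _ h => Fin.rev_le_rev.mpr h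

lemma exists_antitone_sort (f : Fin n → ℕ) : ∃ σ : Equiv.Perm (Fin n), Antitone (f ∘ σ) := by
  refine ⟨Fin.revPerm.trans (Tuple.sort f), ?_⟩
  have h : (f ∘ (Fin.revPerm.trans (Tuple.sort f)) : Fin n → ℕ)
      = (f ∘ (Tuple.sort f)) ∘ Fin.rev := rfl
  rw [h]
  exact (Tuple.monotone_sort f).comp_antitone rev_antitone

lemma unique_antitone {f : Fin n → ℕ} {σ τ : Equiv.Perm (Fin n)}
    (hσ : Antitone (f ∘ σ)) (hτ : Antitone (f ∘ τ)) : f ∘ σ = f ∘ τ := by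
  have h1 : Monotone (f ∘ (Fin.revPerm.trans σ : Equiv.Perm (Fin n))) := by
    have h : (f ∘ (Fin.revPerm.trans σ : Equiv.Perm (Fin n)) : Fin n → ℕ)
        = (f ∘ σ) ∘ Fin.rev := rfl
    rw [h]; exact hσ.comp rev_antitone
  have h2 : Monotone (f ∘ (Fin.revPerm.trans τ : Equiv.Perm (Fin n))) := by
    have h : (f ∘ (Fin.revPerm.trans τ : Equiv.Perm (Fin n)) : Fin n → ℕ)
        = (f ∘ τ) ∘ Fin.rev := rfl
    rw [h]; exact hτ.comp rev_antitone
  have h3 := Tuple.unique_monotone h1 h2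
  funext x
  have := congrFun h3 (Fin.rev x)
  simpa [Fin.rev_rev] using this

lemma psum_top (f : Fin n → ℕ) : psum f n = ∑ i, f i := by
  unfold psum
  congr 1
  ext i
  simp [i.isLt]

lemma psum_comp_top (f : Fin n → ℕ) (σ : Equiv.Perm (Fin n)) :
    psum (f ∘ σ) n = ∑ i, f i := by
  rw [psum_top]; exact Equiv.sum_comp σ f

/-- the index set for psum -/
def K (n k : ℕ) : Finset (Fin n) := Finset.univ.filter (fun i : Fin n => (i : ℕ) < k)

lemma psum_eq_sum_K (f : Fin n → ℕ) (k : ℕ) : psum f k = ∑ i ∈ K n k, f i := rfl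

lemma card_K_le (k : ℕ) : (K n k).card ≤ k := by
  classical
  have : (K n k).card = ((K n k).image (Fin.val)).card :=
    (Finset.card_image_of_injective _ Fin.val_injective).symm
  rw [this]
  have hsub : (K n k).image (Fin.val) ⊆ Finset.range k := by
    intro m hm
    simp only [Finset.mem_image, K, Finset.mem_filter] at hm
    obtain ⟨i, ⟨_, hi⟩, rfl⟩ := hm
    simpa using hi
  calc ((K n k).image (Fin.val)).card ≤ (Finset.range k).card := Finset.card_le_card hsub
    _ = k := Finset.card_range k

lemma sum_le_psum {g : Fin n → ℕ} (hg : Antitone g) {k : ℕ} :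
    ∀ m : ℕ, ∀ S : Finset (Fin n), (∑ x ∈ S, (x : ℕ)) ≤ m → S.card ≤ k →
      ∑ x ∈ S, g x ≤ psum g k := by
  classical
  intro m
  induction m using Nat.strong_induction_on with
  | _ m IH =>
    intro S hsum hcard
    by_cases hsub : S ⊆ K n k
    · rw [psum_eq_sum_K]
      exact Finset.sum_le_sum_of_subset hsub
    · obtain ⟨s, hsS, hsk⟩ := Finset.not_subset.mp hsub
      have hsk' : k ≤ (s : ℕ) := by
        simp only [K, Finset.mem_filter, Finset.mem_univ, true_and] at hsk; omega
      -- find i in K n k but not in S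
      have hex : ∃ i ∈ K n k, i ∉ S := by
        by_contra hno
        push_neg at hno
        have hKS : K n k ⊆ S := hno
        have : insert s (K n k) ⊆ S := Finset.insert_subset hsS hKS
        have h1 : (K n k).card + 1 ≤ S.card := by
          have := Finset.card_le_card this
          rwa [Finset.card_insert_of_notMem hsk] at this
        -- card K n k = k  since k ≤ s < n
        have hkn : k < n := lt_of_le_of_lt hsk' s.isLt
        have hKcard : (K n k).card = k := by
          have : (K n k).card = ((K n k).image (Fin.val)).card :=
            (Finset.card_image_of_injective _ Fin.val_injective).symm
          rw [this]
          have himg : (K n k).image (Fin.val) = Finset.range k := by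
            ext m'
            simp only [Finset.mem_image, K, Finset.mem_filter, Finset.mem_univ, true_and,
              Finset.mem_range]
            constructor
            · rintro ⟨i, hi, rfl⟩; exact hi
            · intro hm'
              exact ⟨⟨m', lt_trans hm' hkn⟩, hm', rfl⟩
          rw [himg, Finset.card_range]
        omega
      obtain ⟨i, hiK, hiS⟩ := hex
      have hik : (i : ℕ) < k := by
        simp only [K, Finset.mem_filter, Finset.mem_univ, true_and] at hiK; exact hiK
      have his : i ≤ s := by
        rw [Fin.le_def]; omega
      have hine : i ≠ s := fun h => hiS (h ▸ hsS)
      set S' := insert i (S.erase s) with hS'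
      have hiS' : i ∉ S.erase s := fun h => hiS (Finset.mem_of_mem_erase h)
      have hcard' : S'.card = S.card := by
        rw [hS', Finset.card_insert_of_notMem hiS', Finset.card_erase_of_mem hsS]
        have : 1 ≤ S.card := Finset.card_pos.mpr ⟨s, hsS⟩
        omega
      have hsum'' : (∑ x ∈ S', (x : ℕ)) < ∑ x ∈ S, (x : ℕ) := by
        rw [hS', Finset.sum_insert hiS']
        have h5 : (s : ℕ) + ∑ x ∈ S.erase s, (x : ℕ) = ∑ x ∈ S, (x : ℕ) :=
          Finset.add_sum_erase S (fun x : Fin n => (x : ℕ)) hsS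
        omega
      have hg' : ∑ x ∈ S, g x ≤ ∑ x ∈ S', g x := by
        rw [hS', Finset.sum_insert hiS']
        have h5 : g s + ∑ x ∈ S.erase s, g x = ∑ x ∈ S, g x :=
          Finset.add_sum_erase S g hsS
        have hgs : g s ≤ g i := hg his
        omega
      have := IH (∑ x ∈ S', (x : ℕ)) (lt_of_lt_of_le hsum'' hsum) S' le_rfl
        (by rw [hcard']; exact hcard)
      exact le_trans hg' this

lemma sum_le_psum' {g : Fin n → ℕ} (hg : Antitone g) {k : ℕ} (S : Finset (Fin n))
    (hcard : S.card ≤ k) : ∑ x ∈ S, g x ≤ psum g k :=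
  sum_le_psum hg _ S le_rfl hcard

lemma maj_refl (a : Fin n → ℕ) : Majorizes a a := by
  obtain ⟨σ, hσ⟩ := exists_antitone_sort a
  exact ⟨σ, σ, hσ, hσ, fun k _ => le_rfl, rfl⟩

lemma maj_trans {a b c : Fin n → ℕ} (hab : Majorizes a b) (hbc : Majorizes b c) :
    Majorizes a c := by
  obtain ⟨σ, τ, hσ, hτ, hk, ht⟩ := hab
  obtain ⟨σ', τ', hσ', hτ', hk', ht'⟩ := hbc
  have heq : (b ∘ τ : Fin n → ℕ) = b ∘ σ' := unique_antitone hτ hσ'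
  refine ⟨σ, τ', hσ, hτ', fun k hkn => ?_, ?_⟩
  · calc psum (c ∘ τ') k ≤ psum (b ∘ σ') k := hk' k hkn
      _ = psum (b ∘ τ) k := by rw [heq]
      _ ≤ psum (a ∘ σ) k := hk k hkn
  · rw [ht, heq, ← ht']


lemma maj_step {d d' : Fin n → ℕ} {i j : Fin n} (hij : i ≠ j) (hji : d j ≤ d i)
    (hj1 : 1 ≤ d j) (h'i : d' i = d i + 1) (h'j : d' j + 1 = d j)
    (hoth : ∀ v, v ≠ i → v ≠ j → d' v = d v) : Majorizes d' d := by
  classical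
  obtain ⟨σ, hσ⟩ := exists_antitone_sort d'
  obtain ⟨τ, hτ⟩ := exists_antitone_sort d
  have hsum_eq : ∑ v, d' v = ∑ v, d v := by
    have hji' : j ∈ (Finset.univ : Finset (Fin n)).erase i :=
      Finset.mem_erase.mpr ⟨(Ne.symm hij), Finset.mem_univ j⟩
    have h1 : ∀ f : Fin n → ℕ,
        ∑ v, f v = f i + (f j + ∑ v ∈ (Finset.univ.erase i).erase j, f v) := by
      intro f
      rw [Finset.add_sum_erase _ f hji', Finset.add_sum_erase _ f (Finset.mem_univ i)]
    rw [h1 d', h1 d]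
    have hrest : ∑ v ∈ (Finset.univ.erase i).erase j, d' v
        = ∑ v ∈ (Finset.univ.erase i).erase j, d v := by
      apply Finset.sum_congr rfl
      intro v hv
      simp only [Finset.mem_erase] at hv
      exact hoth v hv.2.1 hv.1
    omega
  refine ⟨σ, τ, hσ, hτ, fun k hkn => ?_, ?_⟩
  · -- prefix sums
    set S : Finset (Fin n) := (K n k).image τ with hS
    have hpsum : psum (d ∘ τ) k = ∑ v ∈ S, d v := by
      rw [psum_eq_sum_K, hS, Finset.sum_image (fun _ _ _ _ h => τ.injective h)]
      rfl
    have hScard : S.card ≤ k := by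
      rw [hS, Finset.card_image_of_injective _ τ.injective]
      exact card_K_le k
    -- find T with card T ≤ k and ∑_S d ≤ ∑_T d'
    have hT : ∃ T : Finset (Fin n), T.card ≤ k ∧ ∑ v ∈ S, d v ≤ ∑ v ∈ T, d' v := by
      by_cases hjS : j ∈ S
      · by_cases hiS : i ∈ S
        · refine ⟨S, hScard, le_of_eq ?_⟩
          have hji' : j ∈ S.erase i := Finset.mem_erase.mpr ⟨Ne.symm hij, hjS⟩
          have h1 : ∀ f : Fin n → ℕ,
              ∑ v ∈ S, f v = f i + (f j + ∑ v ∈ (S.erase i).erase j, f v) := by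
            intro f
            rw [Finset.add_sum_erase _ f hji', Finset.add_sum_erase _ f hiS]
          rw [h1 d', h1 d]
          have hrest : ∑ v ∈ (S.erase i).erase j, d v
              = ∑ v ∈ (S.erase i).erase j, d' v := by
            apply Finset.sum_congr rfl
            intro v hv
            simp only [Finset.mem_erase] at hv
            exact (hoth v hv.2.1 hv.1).symm
          omega
        · -- j ∈ S, i ∉ S : T = insert i (S.erase j)
          have hiS' : i ∉ S.erase j := fun h => hiS (Finset.mem_of_mem_erase h)
          refine ⟨insert i (S.erase j), ?_, ?_⟩
          · rw [Finset.card_insert_of_notMem hiS', Finset.card_erase_of_mem hjS]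
            have : 1 ≤ S.card := Finset.card_pos.mpr ⟨j, hjS⟩
            omega
          · rw [Finset.sum_insert hiS']
            have h5 : d j + ∑ x ∈ S.erase j, d x = ∑ x ∈ S, d x :=
              Finset.add_sum_erase S d hjS
            have hrest : ∑ v ∈ S.erase j, d' v = ∑ v ∈ S.erase j, d v := by
              apply Finset.sum_congr rfl
              intro v hv
              have hv' := Finset.mem_erase.mp hv
              exact hoth v (fun h => hiS (h ▸ Finset.mem_of_mem_erase hv)) hv'.1
            omega
      · -- j ∉ S : T = S termwise
        refine ⟨S, hScard, Finset.sum_le_sum ?_⟩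
        intro v hv
        by_cases hvi : v = i
        · subst hvi; omega
        · rw [hoth v hvi (fun h => hjS (h ▸ hv))]
    obtain ⟨T, hTcard, hTsum⟩ := hT
    have hTsum' : ∑ v ∈ T, d' v = ∑ u ∈ T.image σ.symm, (d' ∘ σ) u := by
      rw [Finset.sum_image (fun _ _ _ _ h => σ.symm.injective h)]
      apply Finset.sum_congr rfl
      intro v _
      simp
    have hTcard' : (T.image σ.symm).card ≤ k := by
      rw [Finset.card_image_of_injective _ σ.symm.injective]; exact hTcard
    calc psum (d ∘ τ) k = ∑ v ∈ S, d v := hpsum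
      _ ≤ ∑ v ∈ T, d' v := hTsum
      _ = ∑ u ∈ T.image σ.symm, (d' ∘ σ) u := hTsum'
      _ ≤ psum (d' ∘ σ) k := sum_le_psum' hσ _ hTcard'
  · rw [psum_comp_top, psum_comp_top, hsum_eq]


lemma rdeg_pos {E : Finset (Finset (Fin n))} {e : Finset (Fin n)} {v : Fin n}
    (he : e ∈ E) (hv : v ∈ e) : 1 ≤ rdeg E v :=
  Finset.card_pos.mpr ⟨e, Finset.mem_filter.mpr ⟨he, hv⟩⟩

section swap
variable {E : Finset (Finset (Fin n))} {X : Finset (Fin n)} {i j : Fin n}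

lemma swap_rdeg (hjE : insert j X ∈ E) (hiE : insert i X ∉ E) (v : Fin n) :
    rdeg (insert (insert i X) (E.erase (insert j X))) v
      = (if v ∈ insert i X then 1 else 0)
        + (rdeg E v - if v ∈ insert j X then 1 else 0) := by
  classical
  unfold rdeg
  rw [Finset.filter_insert]
  by_cases hv : v ∈ insert i X
  · rw [if_pos hv, if_pos hv]
    have hnot : insert i X ∉ Finset.filter (fun e => v ∈ e) (E.erase (insert j X)) :=
      fun h => hiE (Finset.mem_of_mem_erase (Finset.mem_filter.mp h).1)
    rw [Finset.card_insert_of_notMem hnot, Finset.filter_erase, Finset.card_erase_eq_ite]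
    by_cases hvj : v ∈ insert j X
    · rw [if_pos hvj, if_pos (Finset.mem_filter.mpr ⟨hjE, hvj⟩)]
      have h1 : 1 ≤ (Finset.filter (fun e => v ∈ e) E).card :=
        Finset.card_pos.mpr ⟨_, Finset.mem_filter.mpr ⟨hjE, hvj⟩⟩
      omega
    · rw [if_neg hvj, if_neg (show insert j X ∉ Finset.filter (fun e => v ∈ e) E from fun h => hvj (Finset.mem_filter.mp h).2)]
      omega
  · rw [if_neg hv, if_neg hv, Finset.filter_erase, Finset.card_erase_eq_ite]
    by_cases hvj : v ∈ insert j X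
    · rw [if_pos hvj, if_pos (Finset.mem_filter.mpr ⟨hjE, hvj⟩)]
      omega
    · rw [if_neg hvj, if_neg (show insert j X ∉ Finset.filter (fun e => v ∈ e) E from fun h => hvj (Finset.mem_filter.mp h).2)]
      omega

lemma swap_rdeg_i (hiX : i ∉ X) (hij : i ≠ j)
    (hjE : insert j X ∈ E) (hiE : insert i X ∉ E) :
    rdeg (insert (insert i X) (E.erase (insert j X))) i = rdeg E i + 1 := by
  rw [swap_rdeg hjE hiE]
  rw [if_pos (Finset.mem_insert_self i X),
    if_neg (by simp only [Finset.mem_insert]; push_neg; exact ⟨hij, hiX⟩)]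
  omega

lemma swap_rdeg_j (hjX : j ∉ X) (hij : i ≠ j)
    (hjE : insert j X ∈ E) (hiE : insert i X ∉ E) :
    rdeg (insert (insert i X) (E.erase (insert j X))) j + 1 = rdeg E j := by
  rw [swap_rdeg hjE hiE]
  rw [if_neg (by simp only [Finset.mem_insert]; push_neg; exact ⟨Ne.symm hij, hjX⟩),
    if_pos (Finset.mem_insert_self j X)]
  have h1 : 1 ≤ rdeg E j := rdeg_pos hjE (Finset.mem_insert_self j X)
  omega

lemma swap_rdeg_oth (hjE : insert j X ∈ E) (hiE : insert i X ∉ E)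
    {v : Fin n} (hvi : v ≠ i) (hvj : v ≠ j) :
    rdeg (insert (insert i X) (E.erase (insert j X))) v = rdeg E v := by
  rw [swap_rdeg hjE hiE]
  by_cases hvX : v ∈ X
  · rw [if_pos (Finset.mem_insert_of_mem hvX), if_pos (Finset.mem_insert_of_mem hvX)]
    have h1 : 1 ≤ rdeg E v := rdeg_pos hjE (Finset.mem_insert_of_mem hvX)
    omega
  · rw [if_neg (by simp only [Finset.mem_insert]; push_neg; exact ⟨hvi, hvX⟩),
      if_neg (by simp only [Finset.mem_insert]; push_neg; exact ⟨hvj, hvX⟩)]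
    omega

lemma swap_card (hjE : insert j X ∈ E) (hiE : insert i X ∉ E) :
    (insert (insert i X) (E.erase (insert j X))).card = E.card := by
  rw [Finset.card_insert_of_notMem (fun h => hiE (Finset.mem_of_mem_erase h)),
    Finset.card_erase_of_mem hjE]
  have : 1 ≤ E.card := Finset.card_pos.mpr ⟨_, hjE⟩
  omega

end swap

/-- the potential function -/
def Phi (E : Finset (Finset (Fin n))) : ℕ := ∑ v, rdeg E v ^ 2

lemma phi_le (E : Finset (Finset (Fin n))) : Phi E ≤ n * E.card ^ 2 := by
  unfold Phi
  calc ∑ v, rdeg E v ^ 2 ≤ ∑ _v : Fin n, E.card ^ 2 := by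
        apply Finset.sum_le_sum
        intro v _
        exact Nat.pow_le_pow_left (Finset.card_filter_le _ _) 2
    _ = n * E.card ^ 2 := by
        rw [Finset.sum_const, Finset.card_univ, Fintype.card_fin, smul_eq_mul]

lemma phi_lt {E : Finset (Finset (Fin n))} {X : Finset (Fin n)} {i j : Fin n}
    (hiX : i ∉ X) (hjX : j ∉ X) (hij : i ≠ j) (hji : rdeg E j ≤ rdeg E i)
    (hjE : insert j X ∈ E) (hiE : insert i X ∉ E) :
    Phi E < Phi (insert (insert i X) (E.erase (insert j X))) := by
  classical
  set E' := insert (insert i X) (E.erase (insert j X)) with hE'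
  unfold Phi
  have hji' : j ∈ (Finset.univ : Finset (Fin n)).erase i :=
    Finset.mem_erase.mpr ⟨Ne.symm hij, Finset.mem_univ j⟩
  have h1 : ∀ f : Fin n → ℕ,
      ∑ v, f v = f i + (f j + ∑ v ∈ (Finset.univ.erase i).erase j, f v) := by
    intro f
    rw [Finset.add_sum_erase _ f hji', Finset.add_sum_erase _ f (Finset.mem_univ i)]
  rw [h1 (fun v => rdeg E v ^ 2), h1 (fun v => rdeg E' v ^ 2)]
  have hrest : ∑ v ∈ (Finset.univ.erase i).erase j, rdeg E v ^ 2
      = ∑ v ∈ (Finset.univ.erase i).erase j, rdeg E' v ^ 2 := by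
    apply Finset.sum_congr rfl
    intro v hv
    simp only [Finset.mem_erase] at hv
    rw [swap_rdeg_oth hjE hiE hv.2.1 hv.1]
  have hi' : rdeg E' i = rdeg E i + 1 := swap_rdeg_i hiX hij hjE hiE
  have hj' : rdeg E' j + 1 = rdeg E j := swap_rdeg_j hjX hij hjE hiE
  rw [hrest, hi', ← hj']
  have hab : rdeg E' j < rdeg E i := by omega
  nlinarith [hab]


def Stable (E : Finset (Finset (Fin n))) : Prop :=
  ∀ (i j : Fin n) (X : Finset (Fin n)), i ∉ X → j ∉ X → i ≠ j →
    rdeg E j ≤ rdeg E i → insert j X ∈ E → insert i X ∈ E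

lemma mem_image_perm {E : Finset (Finset (Fin n))} {W : Finset (Fin n)}
    (π : Equiv.Perm (Fin n)) :
    W ∈ E.image (fun e => e.image π.symm) ↔ W.image π ∈ E := by
  classical
  simp only [Finset.mem_image]
  constructor
  · rintro ⟨e, he, rfl⟩
    rw [Finset.image_image]
    simpa using he
  · intro h
    refine ⟨W.image π, h, ?_⟩
    rw [Finset.image_image]
    simp

lemma rdeg_image_perm (E : Finset (Finset (Fin n))) (π : Equiv.Perm (Fin n)) (v : Fin n) :
    rdeg (E.image (fun e => e.image π.symm)) v = rdeg E (π v) := by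
  classical
  unfold rdeg
  rw [Finset.filter_image]
  rw [Finset.card_image_of_injective]
  · congr 1
    apply Finset.filter_congr
    intro e _
    simp only [Finset.mem_image]
    constructor
    · rintro ⟨a, ha, haa⟩
      have : a = π v := by
        have := congrArg π haa
        simpa using this
      exact this ▸ ha
    · intro h
      exact ⟨π v, h, by simp⟩
  · intro a b h
    have := congrArg (fun s : Finset (Fin n) => s.image (π : Fin n → Fin n)) h
    simp only [Finset.image_image] at this
    simpa using this

/-- chain lemma: an order-stable family is closed downward under SetLE -/
lemma chain_lemma {F : Finset (Finset (Fin n))}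
    (hF : ∀ (i j : Fin n) (Z : Finset (Fin n)), i < j → i ∉ Z → j ∉ Z →
      insert j Z ∈ F → insert i Z ∈ F) :
    ∀ m : ℕ, ∀ Y X : Finset (Fin n), (∑ y ∈ Y, (y : ℕ)) ≤ m → Y ∈ F →
      X.card = Y.card → SetLE X Y → X ∈ F := by
  classical
  intro m
  induction m using Nat.strong_induction_on with
  | _ m IH =>
    intro Y X hsum hY hcard hle
    by_cases hXY : X = Y
    · exact hXY ▸ hY
    · have hXYne : (X \ Y).Nonempty := by
        rw [Finset.sdiff_nonempty]
        intro hsub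
        exact hXY (Finset.eq_of_subset_of_card_le hsub hcard.ge)
      have hYXne : (Y \ X).Nonempty := by
        rw [Finset.sdiff_nonempty]
        intro hsub
        exact hXY (Finset.eq_of_subset_of_card_le hsub hcard.le).symm
      set i := (X \ Y).max' hXYne with hi
      set j := (Y \ X).max' hYXne with hj
      have hiX : i ∈ X := (Finset.mem_sdiff.mp ((X \ Y).max'_mem hXYne)).1
      have hiY : i ∉ Y := (Finset.mem_sdiff.mp ((X \ Y).max'_mem hXYne)).2
      have hjY : j ∈ Y := (Finset.mem_sdiff.mp ((Y \ X).max'_mem hYXne)).1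
      have hjX : j ∉ X := (Finset.mem_sdiff.mp ((Y \ X).max'_mem hYXne)).2
      have hij : i < j := by
        by_contra hc
        push_neg at hc
        have hne : j ≠ i := fun h => hiY (h ▸ hjY)
        have hji : j < i := lt_of_le_of_ne hc hne
        -- Y.filter (i ≤ ·) ⊆ (X.filter (i ≤ ·)).erase i
        have hsub : Y.filter (fun y => i ≤ y) ⊆ (X.filter (fun x => i ≤ x)).erase i := by
          intro y hy
          obtain ⟨hyY, hiy⟩ := Finset.mem_filter.mp hy
          have hyne : y ≠ i := fun h => hiY (h ▸ hyY)
          have hylt : i < y := lt_of_le_of_ne hiy (Ne.symm hyne)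
          have hyX : y ∈ X := by
            by_contra hyX
            have : y ≤ j := Finset.le_max' _ y (Finset.mem_sdiff.mpr ⟨hyY, hyX⟩)
            exact absurd (lt_of_lt_of_le hylt (le_trans this (le_of_lt hji))) (lt_irrefl i)
          exact Finset.mem_erase.mpr ⟨hyne, Finset.mem_filter.mpr ⟨hyX, hiy⟩⟩
        have h1 := hle i
        have h2 := Finset.card_le_card hsub
        have h3 : i ∈ X.filter (fun x => i ≤ x) := Finset.mem_filter.mpr ⟨hiX, le_refl i⟩
        rw [Finset.card_erase_of_mem h3] at h2
        have h4 : 1 ≤ (X.filter (fun x => i ≤ x)).card := Finset.card_pos.mpr ⟨i, h3⟩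
        omega
      -- the replacement set
      have hiYe : i ∉ Y.erase j := fun h => hiY (Finset.mem_of_mem_erase h)
      set Y' := insert i (Y.erase j) with hY'def
      have hY' : Y' ∈ F := by
        have := hF i j (Y.erase j) hij hiYe (Finset.notMem_erase j Y)
        rw [Finset.insert_erase hjY] at this
        exact this hY
      have hYpos : 1 ≤ Y.card := Finset.card_pos.mpr ⟨j, hjY⟩
      have hcard' : Y'.card = Y.card := by
        rw [hY'def, Finset.card_insert_of_notMem hiYe, Finset.card_erase_of_mem hjY]
        omega
      have hle' : SetLE X Y' := by
        intro t
        have ht := hle t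
        have hYfilter : Y'.filter (fun y => t ≤ y)
            = if t ≤ i then insert i ((Y.filter (fun y => t ≤ y)).erase j)
              else (Y.filter (fun y => t ≤ y)).erase j := by
          rw [hY'def, Finset.filter_insert, Finset.filter_erase]
        by_cases hti : t ≤ i
        · -- count unchanged
          rw [hYfilter, if_pos hti]
          have hjf : j ∈ Y.filter (fun y => t ≤ y) :=
            Finset.mem_filter.mpr ⟨hjY, le_trans hti (le_of_lt hij)⟩
          have hif : i ∉ (Y.filter (fun y => t ≤ y)).erase j :=
            fun h => hiY (Finset.mem_filter.mp (Finset.mem_of_mem_erase h)).1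
          rw [Finset.card_insert_of_notMem hif, Finset.card_erase_of_mem hjf]
          have : 1 ≤ (Y.filter (fun y => t ≤ y)).card := Finset.card_pos.mpr ⟨j, hjf⟩
          omega
        · push_neg at hti
          by_cases htj : t ≤ j
          · -- strict decrease is fine
            rw [hYfilter, if_neg (not_le.mpr hti), Finset.card_erase_eq_ite]
            have hjf : j ∈ Y.filter (fun y => t ≤ y) := Finset.mem_filter.mpr ⟨hjY, htj⟩
            rw [if_pos hjf]
            -- X.filter (t ≤ ·) ⊆ (Y.filter (t ≤ ·)).erase j
            have hsub : X.filter (fun x => t ≤ x) ⊆ (Y.filter (fun y => t ≤ y)).erase j := by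
              intro x hx
              obtain ⟨hxX, htx⟩ := Finset.mem_filter.mp hx
              have hxj : x ≠ j := fun h => hjX (h ▸ hxX)
              have hxY : x ∈ Y := by
                by_contra hxY
                have h5 : x ≤ i := Finset.le_max' _ x (Finset.mem_sdiff.mpr ⟨hxX, hxY⟩)
                exact absurd (lt_of_lt_of_le hti (le_trans htx h5)) (lt_irrefl i)
              exact Finset.mem_erase.mpr ⟨hxj, Finset.mem_filter.mpr ⟨hxY, htx⟩⟩
            have h2 := Finset.card_le_card hsub
            rw [Finset.card_erase_of_mem hjf] at h2
            omega
          · push_neg at htj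
            -- counts equal to Y's
            rw [hYfilter, if_neg (not_le.mpr hti), Finset.card_erase_eq_ite]
            rw [if_neg (show j ∉ Y.filter (fun y => t ≤ y) from
              fun h => absurd (Finset.mem_filter.mp h).2 (not_le.mpr htj))]
            exact ht
      have hsum' : (∑ y ∈ Y', (y : ℕ)) < ∑ y ∈ Y, (y : ℕ) := by
        rw [hY'def, Finset.sum_insert hiYe]
        have h5 : (j : ℕ) + ∑ y ∈ Y.erase j, (y : ℕ) = ∑ y ∈ Y, (y : ℕ) :=
          Finset.add_sum_erase Y (fun y : Fin n => (y : ℕ)) hjY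
        have : (i : ℕ) < (j : ℕ) := hij
        omega
      exact IH (∑ y ∈ Y', (y : ℕ)) (lt_of_lt_of_le hsum' hsum) Y' X le_rfl hY'
        (by rw [hcard', ← hcard]) hle'

lemma stable_case {r : ℕ} {E : Finset (Finset (Fin n))} (hE : ∀ e ∈ E, e.card = r)
    (hst : Stable E) :
    ∃ (E'' : Finset (Finset (Fin n))) (σ : Equiv.Perm (Fin n)),
      (∀ e ∈ E'', e.card = r) ∧
      IsRIdeal n r (E''.image (fun e => e.image σ)) ∧
      Majorizes (rdeg E'') (rdeg E) := by
  classical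
  obtain ⟨τ, hτ⟩ := exists_antitone_sort (rdeg E)
  refine ⟨E, τ.symm, hE, ?_, maj_refl _⟩
  set F := E.image (fun e => e.image τ.symm) with hF
  have hrdegF : ∀ v, rdeg F v = rdeg E (τ v) := rdeg_image_perm E τ
  have hFuniform : ∀ e ∈ F, e.card = r := by
    intro e he
    rw [hF, Finset.mem_image] at he
    obtain ⟨a, ha, rfl⟩ := he
    rw [Finset.card_image_of_injective _ τ.symm.injective]
    exact hE a ha
  have hFstable : ∀ (i j : Fin n) (Z : Finset (Fin n)), i < j → i ∉ Z → j ∉ Z →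
      insert j Z ∈ F → insert i Z ∈ F := by
    intro i j Z hij hiZ hjZ hjF
    rw [mem_image_perm τ, Finset.image_insert] at hjF ⊢
    apply hst (τ i) (τ j) (Z.image τ)
    · rw [Function.Injective.mem_finset_image τ.injective]; exact hiZ
    · rw [Function.Injective.mem_finset_image τ.injective]; exact hjZ
    · exact fun h => (ne_of_lt hij) (τ.injective h)
    · have h1 : rdeg E (τ j) = rdeg F j := (hrdegF j).symm
      have h2 : rdeg E (τ i) = rdeg F i := (hrdegF i).symm
      rw [h1, h2, hrdegF, hrdegF]
      exact hτ (le_of_lt hij)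
    · exact hjF
  refine ⟨hFuniform, ?_⟩
  intro X Y hY hX hle
  exact chain_lemma hFstable (∑ y ∈ Y, (y : ℕ)) Y X le_rfl hY
    (by rw [hX, hFuniform Y hY]) hle


lemma main_aux (r : ℕ) : ∀ fuel : ℕ, ∀ E : Finset (Finset (Fin n)),
    (∀ e ∈ E, e.card = r) → n * E.card ^ 2 ≤ Phi E + fuel →
    ∃ (E'' : Finset (Finset (Fin n))) (σ : Equiv.Perm (Fin n)),
      (∀ e ∈ E'', e.card = r) ∧
      IsRIdeal n r (E''.image (fun e => e.image σ)) ∧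
      Majorizes (rdeg E'') (rdeg E) := by
  classical
  intro fuel
  induction fuel with
  | zero =>
    intro E hE hfuel
    by_cases hst : Stable E
    · exact stable_case hE hst
    · exfalso
      unfold Stable at hst
      push_neg at hst
      obtain ⟨i, j, X, hiX, hjX, hij, hdeg, hjE, hiE⟩ := hst
      have h1 := phi_lt hiX hjX hij hdeg hjE hiE
      have h2 := phi_le (insert (insert i X) (E.erase (insert j X)))
      rw [swap_card hjE hiE] at h2
      omega
  | succ f IHf =>
    intro E hE hfuel
    by_cases hst : Stable E
    · exact stable_case hE hst
    · unfold Stable at hst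
      push_neg at hst
      obtain ⟨i, j, X, hiX, hjX, hij, hdeg, hjE, hiE⟩ := hst
      set E' := insert (insert i X) (E.erase (insert j X)) with hE'def
      have hcard : E'.card = E.card := swap_card hjE hiE
      have huniform : ∀ e ∈ E', e.card = r := by
        intro e he
        rw [hE'def, Finset.mem_insert] at he
        rcases he with rfl | he
        · rw [Finset.card_insert_of_notMem hiX, ← Finset.card_insert_of_notMem hjX]
          exact hE _ hjE
        · exact hE _ (Finset.mem_of_mem_erase he)
      have hphi : Phi E < Phi E' := phi_lt hiX hjX hij hdeg hjE hiE
      have hfuel' : n * E'.card ^ 2 ≤ Phi E' + f := by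
        rw [hcard]
        omega
      obtain ⟨E'', σ, ha, hb, hc⟩ := IHf E' huniform hfuel'
      refine ⟨E'', σ, ha, hb, maj_trans hc ?_⟩
      exact maj_step hij hdeg (rdeg_pos hjE (Finset.mem_insert_self j X))
        (swap_rdeg_i hiX hij hjE hiE) (swap_rdeg_j hjX hij hjE hiE)
        (fun v hvi hvj => swap_rdeg_oth hjE hiE hvi hvj)

end HGAux

/-- for any `r`-uniform hypergraph `([n], E)` there is an
`r`-uniform hypergraph `E''` on `[n]` whose edge set becomes an order ideal of
`S(n,r)` after relabeling the vertices by some permutation `σ`, and whose degree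
sequence majorizes that of `E`. -/
theorem exists_ideal_majorizing (n r : ℕ) (E : Finset (Finset (Fin n)))
    (hE : ∀ e ∈ E, e.card = r) :
    ∃ (E'' : Finset (Finset (Fin n))) (σ : Equiv.Perm (Fin n)),
      (∀ e ∈ E'', e.card = r) ∧
      IsRIdeal n r (E''.image (fun e => e.image σ)) ∧
      Majorizes (rdeg E'') (rdeg E) := by
  classical
  exact HGAux.main_aux r (n * E.card ^ 2) E hE (Nat.le_add_left _ _)
end
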